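/- arXiv:1904.01712 — 6 statements merged into one kernel-verified Lean document; each statement's English description precedes it below -/
import Mathlib

section
/- Let 1 ≤ p < q < ∞ and d ≥ 1. Define f : ℝ^d → ℝ by f(x) = |x|^{-d/q} if 0 < |x| < 1 and f(x) = 0 otherwise. Then the small Morrey norm of f equals (C_d/d)^{1/q} (1 - p/q)^{-1/p}, where C_d is the surface measure of the unit sphere in ℝ^d. In particular f belongs to the small Morrey space m^p_q. -/
/-!
On the punctured unit ball `|f|^p` is the radial profile `‖x‖^(-d p/q)`, decreasing in `‖x‖`,
so its superlevel sets are (up to the null set `{0}`) balls centred at `0`. By the layer-cake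
formula the integral of `|f|^p` over a ball of radius `R` is therefore largest when the ball is
centred at `0`. For `R ≤ 1`, polar coordinates give
`∫_{B(0,R)} ‖x‖^(-d p/q) = |B(0,1)| R^(d (1 - p/q)) / (1 - p/q)`, and the powers of `R` in the
Morrey quotient cancel: every centred quotient equals `|B(0,1)|^(1/q) (1 - p/q)^(-1/p)`.
-/

open MeasureTheory Metric ENNReal

/-- The small Morrey norm: sup over centers `a` and radii `R ∈ (0,1)` of
`|B(a,R)|^(1/q-1/p) (∫_{B(a,R)} |f|^p)^(1/p)`, valued in `ℝ≥0∞`. -/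
noncomputable def smallMorreyNorm (d : ℕ) (p q : ℝ)
    (f : EuclideanSpace ℝ (Fin d) → ℝ) : ℝ≥0∞ :=
  ⨆ (a : EuclideanSpace ℝ (Fin d)) (R : ℝ) (_ : 0 < R) (_ : R < 1),
    volume (ball a R) ^ (1 / q - 1 / p) *
      (∫⁻ y in ball a R, ENNReal.ofReal (|f y| ^ p)) ^ (1 / p)

/-- The (classical) Morrey norm: sup over all centers `a` and radii `R > 0`. -/
noncomputable def morreyNorm (d : ℕ) (p q : ℝ)
    (f : EuclideanSpace ℝ (Fin d) → ℝ) : ℝ≥0∞ :=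
  ⨆ (a : EuclideanSpace ℝ (Fin d)) (R : ℝ) (_ : 0 < R),
    volume (ball a R) ^ (1 / q - 1 / p) *
      (∫⁻ y in ball a R, ENNReal.ofReal (|f y| ^ p)) ^ (1 / p)

open Set

theorem setLIntegral_le_setLIntegral_of_superlevel_comparable {α : Type*} [MeasurableSpace α]
    {μ : Measure α} {A B : Set α} {g : α → ℝ} (hg : Measurable g) (hg0 : 0 ≤ g)
    (hAB : μ A ≤ μ B)
    (hcomp : ∀ t > 0, {x | t < g x} ≤ᵐ[μ] B ∨ B ≤ᵐ[μ] {x | t < g x}) :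
    ∫⁻ x in A, ENNReal.ofReal (g x) ∂μ ≤ ∫⁻ x in B, ENNReal.ofReal (g x) ∂μ := by
  rw [lintegral_eq_lintegral_meas_lt _ (.of_forall hg0) hg.aemeasurable,
    lintegral_eq_lintegral_meas_lt _ (.of_forall hg0) hg.aemeasurable]
  refine setLIntegral_mono' measurableSet_Ioi fun t ht => ?_
  set L := {x | t < g x}
  have hL : MeasurableSet L := measurableSet_lt measurable_const hg
  rw [Measure.restrict_apply hL, Measure.restrict_apply hL]
  rcases hcomp t ht with hLB | hBL
  · calc μ (L ∩ A) ≤ μ L := measure_mono inter_subset_left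
      _ ≤ μ (L ∩ B) + μ (L \ B) := measure_le_inter_add_sdiff _ _ _
      _ = μ (L ∩ B) := by rw [ae_le_set.1 hLB, add_zero]
  · calc μ (L ∩ A) ≤ μ A := measure_mono inter_subset_right
      _ ≤ μ B := hAB
      _ ≤ μ (B ∩ L) + μ (B \ L) := measure_le_inter_add_sdiff _ _ _
      _ = μ (L ∩ B) := by rw [ae_le_set.1 hBL, add_zero, inter_comm]

noncomputable def truncatedRpow (s r : ℝ) : ℝ := if 0 < r ∧ r < 1 then r ^ s else 0

theorem measurable_truncatedRpow (s : ℝ) : Measurable (truncatedRpow s) :=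
  Measurable.ite (measurableSet_Ioo (a := 0) (b := 1)) (by fun_prop) measurable_const

theorem abs_truncatedRpow_rpow {p : ℝ} (hp : p ≠ 0) (s r : ℝ) :
    |truncatedRpow s r| ^ p = truncatedRpow (s * p) r := by
  unfold truncatedRpow
  split_ifs with h
  · rw [abs_of_nonneg (Real.rpow_nonneg h.1.le _), ← Real.rpow_mul h.1.le]
  · rw [abs_zero, Real.zero_rpow hp]

theorem antitoneOn_truncatedRpow {s : ℝ} (hs : s ≤ 0) :
    AntitoneOn (truncatedRpow s) (Ioi 0) := by
  intro r hr t ht hrt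
  unfold truncatedRpow
  split_ifs with h₁ h₂ h₂
  · exact Real.rpow_le_rpow_of_nonpos hr hrt hs
  · exact absurd ⟨hr, h₁.2.trans_le' hrt⟩ h₂
  · exact Real.rpow_nonneg (le_of_lt hr) _
  · exact le_rfl

/-- At `r = 0` both sides vanish, since `0 ^ s = 0` for `s ≠ 0`. -/
theorem truncatedRpow_eq_rpow {s r : ℝ} (hs : s ≠ 0) (hr : 0 ≤ r) (hr1 : r < 1) :
    truncatedRpow s r = r ^ s := by
  rcases hr.eq_or_lt with rfl | hr0
  · simp [truncatedRpow, Real.zero_rpow hs]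
  · exact if_pos ⟨hr0, hr1⟩

noncomputable def morreyRatio {E : Type*} [PseudoMetricSpace E] [MeasurableSpace E]
    (μ : Measure E) (p q : ℝ) (f : E → ℝ) (a : E) (R : ℝ) : ℝ≥0∞ :=
  μ (ball a R) ^ (1 / q - 1 / p) *
    (∫⁻ y in ball a R, ENNReal.ofReal (|f y| ^ p) ∂μ) ^ (1 / p)

section NormedSpace

variable {E : Type*} [NormedAddCommGroup E] [NormedSpace ℝ E] [MeasurableSpace E] [BorelSpace E]
  [FiniteDimensional ℝ E] [Nontrivial E] (μ : Measure E) [μ.IsAddHaarMeasure]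

theorem setLIntegral_ball_le_setLIntegral_ball_zero {φ : ℝ → ℝ} (hφ : Measurable φ)
    (hφ0 : 0 ≤ φ) (hanti : AntitoneOn φ (Ioi 0)) (a : E) (R : ℝ) :
    ∫⁻ x in ball a R, ENNReal.ofReal (φ ‖x‖) ∂μ ≤
      ∫⁻ x in ball (0 : E) R, ENNReal.ofReal (φ ‖x‖) ∂μ := by
  refine setLIntegral_le_setLIntegral_of_superlevel_comparable (hφ.comp measurable_norm)
    (fun x => hφ0 _) (Measure.addHaar_ball_center μ a R).le fun t _ => ?_
  by_cases h : ∃ y : E, t < φ ‖y‖ ∧ y ≠ 0 ∧ R ≤ ‖y‖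
  · obtain ⟨y, hty, hy0, hRy⟩ := h
    refine Or.inr (ae_le_set.2 (measure_mono_null (fun x hx => ?_) (measure_singleton (0 : E))))
    by_contra hx0
    refine hx.2 (hty.trans_le (hanti (norm_pos_iff.2 hx0) (norm_pos_iff.2 hy0) ?_))
    exact (mem_ball_zero_iff.1 hx.1).le.trans hRy
  · push Not at h
    refine Or.inl (ae_le_set.2 (measure_mono_null (fun x hx => ?_) (measure_singleton (0 : E))))
    by_contra hx0
    exact hx.2 (mem_ball_zero_iff.2 (h x hx.1 hx0))

theorem lintegral_ball_zero_norm_rpow {β R : ℝ} (hβ : -(Module.finrank ℝ E : ℝ) < β)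
    (hR : 0 ≤ R) :
    ∫⁻ x in ball (0 : E) R, ENNReal.ofReal (‖x‖ ^ β) ∂μ =
      ENNReal.ofReal ((Module.finrank ℝ E : ℝ) / (Module.finrank ℝ E + β) *
        R ^ ((Module.finrank ℝ E : ℝ) + β)) * μ (ball 0 1) := by
  set n := Module.finrank ℝ E
  have hn : 1 ≤ n := Module.finrank_pos
  have hradial : EqOn (fun y : ℝ => y ^ (n - 1) • y ^ β) (fun y => y ^ ((n : ℝ) - 1 + β))
      (Ioi 0) := by
    intro y hy
    dsimp only
    rw [smul_eq_mul, Real.rpow_add hy, ← Real.rpow_natCast, Nat.cast_sub hn, Nat.cast_one]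
  have hint : IntegrableOn (fun x : E => ‖x‖ ^ β) (ball 0 R) μ := by
    refine (integrableOn_fun_norm_addHaar μ (f := fun y => y ^ β)).2
      (IntegrableOn.congr_fun ?_ (hradial.mono Ioo_subset_Ioi_self).symm measurableSet_Ioo)
    exact (intervalIntegrable_iff_integrableOn_Ioo_of_le hR).1
      (intervalIntegral.intervalIntegrable_rpow' (by linarith))
  have hradial_integral :
      ∫ y in Ioi 0, y ^ (n - 1) • (Iio R).indicator (fun y => y ^ β) y =
        R ^ ((n : ℝ) + β) / (n + β) := by
    rw [← indicator_smul, setIntegral_indicator measurableSet_Iio, Ioi_inter_Iio,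
      setIntegral_congr_fun measurableSet_Ioo (hradial.mono Ioo_subset_Ioi_self),
      ← integral_Ioc_eq_integral_Ioo, ← intervalIntegral.integral_of_le hR,
      integral_rpow (Or.inl (by linarith)), show (n : ℝ) - 1 + β + 1 = n + β by ring,
      Real.zero_rpow (by linarith), sub_zero]
  have hpolar : ∫ x in ball (0 : E) R, ‖x‖ ^ β ∂μ =
      n / (n + β) * R ^ ((n : ℝ) + β) * μ.real (ball 0 1) := by
    have hind : (ball (0 : E) R).indicator (fun x => ‖x‖ ^ β) =
        fun x => (Iio R).indicator (fun y => y ^ β) ‖x‖ := by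
      ext x
      simp [indicator]
    rw [← integral_indicator measurableSet_ball, hind, integral_fun_norm_addHaar,
      hradial_integral, nsmul_eq_mul, smul_eq_mul]
    ring
  rw [← ofReal_integral_eq_lintegral_ofReal hint (.of_forall fun x => by positivity), hpolar,
    ENNReal.ofReal_mul (mul_nonneg (div_nonneg n.cast_nonneg (by linarith))
      (Real.rpow_nonneg hR _)), Measure.real, ENNReal.ofReal_toReal measure_ball_lt_top.ne]

theorem lintegral_ball_zero_truncatedRpow {s R : ℝ} (hs : s ≠ 0)
    (hsn : -(Module.finrank ℝ E : ℝ) < s) (hR : 0 ≤ R) (hR1 : R ≤ 1) :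
    ∫⁻ x in ball (0 : E) R, ENNReal.ofReal (truncatedRpow s ‖x‖) ∂μ =
      ENNReal.ofReal ((Module.finrank ℝ E : ℝ) / (Module.finrank ℝ E + s) *
        R ^ ((Module.finrank ℝ E : ℝ) + s)) * μ (ball 0 1) := by
  rw [← lintegral_ball_zero_norm_rpow μ hsn hR]
  refine setLIntegral_congr_fun measurableSet_ball fun x hx => ?_
  rw [truncatedRpow_eq_rpow hs (norm_nonneg x) ((mem_ball_zero_iff.1 hx).trans_le hR1)]

theorem morreyRatio_le_morreyRatio_zero {φ : ℝ → ℝ} {p q : ℝ} (hp : 0 < p)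
    (hφ : Measurable φ) (hanti : AntitoneOn (fun r => |φ r| ^ p) (Ioi 0)) (a : E) (R : ℝ) :
    morreyRatio μ p q (fun x => φ ‖x‖) a R ≤
      morreyRatio μ p q (fun x => φ ‖x‖) 0 R := by
  have hlintegral := setLIntegral_ball_le_setLIntegral_ball_zero μ (hφ.abs.pow_const p)
    (fun r => by positivity) hanti a R
  unfold morreyRatio
  rw [Measure.addHaar_ball_center μ a R]
  gcongr

theorem morreyRatio_truncatedRpow_ball_zero {p q R : ℝ} (hp : 0 < p) (hpq : p < q) (hR : 0 < R)
    (hR1 : R ≤ 1) :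
    morreyRatio μ p q (fun x => truncatedRpow (-(Module.finrank ℝ E : ℝ) / q) ‖x‖) 0 R =
      μ (ball 0 1) ^ (1 / q) * ENNReal.ofReal ((1 - p / q) ^ (-(1 : ℝ) / p)) := by
  set n := Module.finrank ℝ E
  have hn : (0 : ℝ) < n := Nat.cast_pos.2 Module.finrank_pos
  have hq : 0 < q := hp.trans hpq
  have hexp : (n : ℝ) + -(n : ℝ) / q * p = n * (1 - p / q) := by ring
  have hpq' : 0 < 1 - p / q := by rw [sub_pos, div_lt_one hq]; exact hpq
  have hintegral : ∫⁻ y in ball (0 : E) R,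
      ENNReal.ofReal (|truncatedRpow (-(n : ℝ) / q) ‖y‖| ^ p) ∂μ =
        ENNReal.ofReal ((1 - p / q)⁻¹ * R ^ (n * (1 - p / q))) * μ (ball 0 1) := by
    simp_rw [abs_truncatedRpow_rpow hp.ne']
    rw [lintegral_ball_zero_truncatedRpow μ (mul_ne_zero (div_ne_zero (neg_ne_zero.2 hn.ne')
      hq.ne') hp.ne') (by nlinarith) hR.le hR1, hexp, div_mul_cancel_left₀ hn.ne']
  have hV : μ (ball (0 : E) 1) ≠ ⊤ := measure_ball_lt_top.ne
  have hV0 : μ (ball (0 : E) 1) ≠ 0 := (measure_ball_pos μ 0 one_pos).ne'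
  have hreal : (R ^ n) ^ (1 / q - 1 / p) * ((1 - p / q)⁻¹ * R ^ (n * (1 - p / q))) ^ (1 / p) =
      (1 - p / q) ^ (-(1 : ℝ) / p) := by
    rw [Real.mul_rpow (by positivity) (by positivity), ← Real.rpow_natCast,
      ← Real.rpow_mul hR.le, ← Real.rpow_mul hR.le, mul_left_comm, ← Real.rpow_add hR,
      Real.inv_rpow hpq'.le, ← Real.rpow_neg hpq'.le, neg_div]
    have : (n : ℝ) * (1 / q - 1 / p) + n * (1 - p / q) * (1 / p) = 0 := by
      field_simp; ring
    rw [this, Real.rpow_zero, mul_one]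
  unfold morreyRatio
  rw [hintegral, Measure.addHaar_ball μ 0 hR.le,
    ENNReal.mul_rpow_of_ne_top ofReal_ne_top hV, ENNReal.mul_rpow_of_ne_top ofReal_ne_top hV,
    ENNReal.ofReal_rpow_of_pos (by positivity), ENNReal.ofReal_rpow_of_pos (by positivity)]
  calc _ = μ (ball (0 : E) 1) ^ (1 / q - 1 / p) * μ (ball (0 : E) 1) ^ (1 / p) *
        ENNReal.ofReal ((R ^ n) ^ (1 / q - 1 / p) *
          ((1 - p / q)⁻¹ * R ^ (n * (1 - p / q))) ^ (1 / p)) := by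
        rw [ENNReal.ofReal_mul (by positivity)]; ring
    _ = _ := by rw [← ENNReal.rpow_add _ _ hV0 hV, sub_add_cancel, hreal]

end NormedSpace

/-- the small Morrey norm of `f(x) = |x|^{-d/q} χ_{(0,1)}(|x|)` equals
`(C_d/d)^{1/q} (1 - p/q)^{-1/p}`, where `C_d/d = |B(0,1)|`. In particular it is finite. -/
theorem smallMorreyNorm_powerFunction (d : ℕ) (p q : ℝ) (hp : 1 ≤ p) (hpq : p < q)
    (hd : 1 ≤ d) :
    smallMorreyNorm d p q
        (fun x => if 0 < ‖x‖ ∧ ‖x‖ < 1 then ‖x‖ ^ (-(d : ℝ) / q) else 0) =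
      (volume (ball (0 : EuclideanSpace ℝ (Fin d)) 1)) ^ (1 / q) *
        ENNReal.ofReal ((1 - p / q) ^ (-(1 : ℝ) / p)) ∧
    smallMorreyNorm d p q
        (fun x => if 0 < ‖x‖ ∧ ‖x‖ < 1 then ‖x‖ ^ (-(d : ℝ) / q) else 0) ≠ ⊤ := by
  have : Nonempty (Fin d) := ⟨⟨0, hd⟩⟩
  have hp0 : 0 < p := zero_lt_one.trans_le hp
  have hq0 : 0 < q := hp0.trans hpq
  set c := volume (ball (0 : EuclideanSpace ℝ (Fin d)) 1) ^ (1 / q) *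
    ENNReal.ofReal ((1 - p / q) ^ (-(1 : ℝ) / p))
  set φ := truncatedRpow (-(d : ℝ) / q)
  have hcentered (R : ℝ) (hR : 0 < R) (hR1 : R ≤ 1) :
      morreyRatio volume p q (fun x : EuclideanSpace ℝ (Fin d) => φ ‖x‖) 0 R = c := by
    have h := morreyRatio_truncatedRpow_ball_zero
      (volume : Measure (EuclideanSpace ℝ (Fin d))) hp0 hpq hR hR1
    rwa [finrank_euclideanSpace_fin] at h
  have hanti : AntitoneOn (fun r => |φ r| ^ p) (Ioi 0) := by
    simp only [φ, abs_truncatedRpow_rpow hp0.ne']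
    exact antitoneOn_truncatedRpow (mul_nonpos_of_nonpos_of_nonneg
      (div_nonpos_of_nonpos_of_nonneg (by simp) hq0.le) hp0.le)
  have hnorm : smallMorreyNorm d p q (fun x => φ ‖x‖) = c := by
    refine le_antisymm (iSup₂_le fun a R => iSup₂_le fun hR hR1 => ?_) ?_
    · calc morreyRatio volume p q (fun x => φ ‖x‖) a R
          ≤ morreyRatio volume p q (fun x => φ ‖x‖) 0 R :=
            morreyRatio_le_morreyRatio_zero volume hp0 (measurable_truncatedRpow _) hanti a R
        _ = c := hcentered R hR hR1.le
    · rw [← hcentered (1 / 2) (by norm_num) (by norm_num)]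
      exact le_iSup₂_of_le 0 (1 / 2) (le_iSup₂_of_le (by norm_num) (by norm_num) le_rfl)
  exact ⟨hnorm, hnorm ▸ mul_ne_top
    (rpow_ne_top_of_nonneg (by positivity) measure_ball_lt_top.ne) ofReal_ne_top⟩
end

section
/- Let 1 ≤ p < q < ∞, d ≥ 1, and 0 < ε < 1. Define f(x) = |x|^{-d/q}·χ_{(0,1)}(|x|) and g(x) = χ_{(0,ε)}(|x|)·f(x) on ℝ^d. Then the small Morrey norms of g and f are equal: ‖g‖_{m^p_q} = ‖f‖_{m^p_q} = (C_d/d)^{1/q}(1 - p/q)^{-1/p}. -/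
open MeasureTheory Metric ENNReal

open Set

/-! With `α = d p / q`, `|f| ^ p` is `|x| ^ (-α)` on a punctured centred ball `B(0, c)`. Over an
arbitrary ball `B(a, R)` only `B(a, R) ∩ B(0, c)` contributes, and by the bathtub principle its
integral is at most the integral over `B(0, min R c)`, whose measure is at least that of the
intersection and on which `|x| ^ (-α)` takes the larger values; since `1/q - 1/p < 0`, replacing
`B(a, R)` by this smaller ball also increases the volume factor. On centred balls the Morrey
quotient of `|x| ^ (-d/q)` does not depend on the radius (the function is invariant under the
Morrey scaling), and polar coordinates evaluate it as `|B(0,1)| ^ (1/q) (1 - p/q) ^ (-1/p)`. So the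
supremum is attained on every small centred ball, whatever the truncation radius. -/

theorem ENNReal.rpow_le_rpow_of_nonpos {x y : ℝ≥0∞} {z : ℝ} (hxy : x ≤ y) (hz : z ≤ 0) :
    y ^ z ≤ x ^ z := by
  rw [← neg_neg z, rpow_neg y, rpow_neg x, ENNReal.inv_le_inv]
  exact rpow_le_rpow hxy (neg_nonneg.2 hz)

theorem setLIntegral_le_setLIntegral_of_measure_le {α : Type*} [MeasurableSpace α]
    {μ : Measure α} {s t : Set α} {f : α → ℝ≥0∞} {c : ℝ≥0∞} (hs : MeasurableSet s)
    (ht : MeasurableSet t) (hst : μ s ≤ μ t) (ht_fin : μ t ≠ ∞)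
    (hf_out : ∀ x ∈ s \ t, f x ≤ c) (hf_in : ∀ᵐ x ∂μ, x ∈ t \ s → c ≤ f x) :
    ∫⁻ x in s, f x ∂μ ≤ ∫⁻ x in t, f x ∂μ := by
  have hdiff : μ (s \ t) ≤ μ (t \ s) := by
    have hfin : μ (s ∩ t) ≠ ∞ := measure_ne_top_of_subset inter_subset_right ht_fin
    rw [← measure_inter_add_sdiff s ht, ← measure_inter_add_sdiff t hs, inter_comm t] at hst
    exact (ENNReal.add_le_add_iff_left hfin).1 hst
  calc ∫⁻ x in s, f x ∂μ = ∫⁻ x in s ∩ t, f x ∂μ + ∫⁻ x in s \ t, f x ∂μ :=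
        (lintegral_inter_add_sdiff f s ht).symm
    _ ≤ ∫⁻ x in s ∩ t, f x ∂μ + ∫⁻ _ in s \ t, c ∂μ :=
        add_le_add le_rfl (setLIntegral_mono' (hs.diff ht) hf_out)
    _ ≤ ∫⁻ x in s ∩ t, f x ∂μ + ∫⁻ _ in t \ s, c ∂μ := by
        simp only [setLIntegral_const]
        gcongr
    _ ≤ ∫⁻ x in t ∩ s, f x ∂μ + ∫⁻ x in t \ s, f x ∂μ := by
        rw [inter_comm]
        exact add_le_add le_rfl (setLIntegral_mono_ae' (ht.diff hs) hf_in)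
    _ = ∫⁻ x in t, f x ∂μ := lintegral_inter_add_sdiff f t hs

section NormRpow

variable {E : Type*} [NormedAddCommGroup E]

noncomputable def truncatedNormRpow (c s : ℝ) (x : E) : ℝ :=
  if 0 < ‖x‖ ∧ ‖x‖ < c then ‖x‖ ^ s else 0

theorem abs_truncatedNormRpow_rpow {c s p : ℝ} (hp : p ≠ 0) (x : E) :
    |truncatedNormRpow c s x| ^ p = truncatedNormRpow c (s * p) x := by
  unfold truncatedNormRpow
  split_ifs
  · rw [abs_of_nonneg (by positivity), ← Real.rpow_mul (norm_nonneg x)]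
  · rw [abs_zero, Real.zero_rpow hp]

variable [MeasurableSpace E] [BorelSpace E]

theorem lintegral_ball_zero_truncatedNormRpow {μ : Measure E} {c s R : ℝ} (hs : s ≠ 0)
    (hRc : R ≤ c) :
    ∫⁻ x in ball 0 R, ENNReal.ofReal (truncatedNormRpow c s x) ∂μ =
      ∫⁻ x in ball 0 R, ENNReal.ofReal (‖x‖ ^ s) ∂μ := by
  refine setLIntegral_congr_fun measurableSet_ball fun x hx => ?_
  rcases eq_or_ne x 0 with rfl | hx0
  · simp [truncatedNormRpow, Real.zero_rpow hs]
  · rw [truncatedNormRpow, if_pos ⟨norm_pos_iff.2 hx0, (mem_ball_zero_iff.1 hx).trans_le hRc⟩]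

variable [NormedSpace ℝ E] [FiniteDimensional ℝ E] [Nontrivial E]
  (μ : Measure E) [μ.IsAddHaarMeasure]

theorem lintegral_ball_norm_rpow {s r : ℝ} (hs : -(Module.finrank ℝ E : ℝ) < s) (hr : 0 ≤ r) :
    ∫⁻ x in ball 0 r, ENNReal.ofReal (‖x‖ ^ s) ∂μ =
      ENNReal.ofReal (Module.finrank ℝ E * r ^ (Module.finrank ℝ E + s) /
        (Module.finrank ℝ E + s)) * μ (ball 0 1) := by
  set n := Module.finrank ℝ E
  have hn : 1 ≤ n := Module.finrank_pos
  have hint : IntegrableOn (fun x : E => ‖x‖ ^ s) (ball 0 r) μ :=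
    integrableOn_ball_of_norm_le_rpow (C := 1) hn (α := -s) (by linarith)
      (ae_of_all _ fun x => by simp [abs_of_nonneg (Real.rpow_nonneg (norm_nonneg x) s)])
      (measurable_norm.pow_const s).aestronglyMeasurable
  rw [← ofReal_integral_eq_lintegral_ofReal hint (ae_of_all _ fun x => by positivity)]
  have hpolar : ∫ x in ball 0 r, ‖x‖ ^ s ∂μ =
      n * μ.real (ball 0 1) * ∫ y in Ioo 0 r, y ^ ((n : ℝ) - 1 + s) := by
    have hradial : ∀ x : E, (ball 0 r).indicator (fun x : E => ‖x‖ ^ s) x =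
        (Iio r).indicator (fun y : ℝ => y ^ s) ‖x‖ := fun x => by
      simp [indicator]
    rw [← integral_indicator measurableSet_ball, funext hradial, integral_fun_norm_addHaar,
      ← Ioi_inter_Iio, ← setIntegral_indicator measurableSet_Iio, nsmul_eq_mul, smul_eq_mul,
      mul_assoc]
    congr 2
    refine setIntegral_congr_fun measurableSet_Ioi fun y (hy : 0 < y) => ?_
    by_cases hyr : y < r
    · rw [indicator_of_mem (mem_Iio.2 hyr), indicator_of_mem (mem_Iio.2 hyr), smul_eq_mul,
        ← Nat.cast_pred hn, Real.rpow_add hy, Real.rpow_natCast]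
    · simp [hyr]
  rw [hpolar, ← integral_Ioc_eq_integral_Ioo, ← intervalIntegral.integral_of_le hr,
    integral_rpow (Or.inl (by linarith)), show (n : ℝ) - 1 + s + 1 = n + s by ring,
    Real.zero_rpow (by linarith : (n : ℝ) + s ≠ 0), sub_zero, mul_right_comm,
    ENNReal.ofReal_mul (mul_nonneg n.cast_nonneg (div_nonneg (by positivity) (by linarith))),
    ofReal_measureReal measure_ball_lt_top.ne, mul_div_assoc]

theorem measure_ball_rpow_mul_lintegral_ball_norm_rpow {p q r : ℝ}
    (hp : 0 < p) (hpq : p < q) (hr : 0 < r) :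
    μ (ball 0 r) ^ (1 / q - 1 / p) *
        (∫⁻ x in ball 0 r, ENNReal.ofReal (‖x‖ ^ (-(Module.finrank ℝ E : ℝ) / q * p)) ∂μ) ^
          (1 / p) =
      μ (ball 0 1) ^ (1 / q) * ENNReal.ofReal ((1 - p / q) ^ (-(1 : ℝ) / p)) := by
  set n : ℝ := (Module.finrank ℝ E : ℝ)
  set σ : ℝ := 1 - p / q
  have hn : 0 < n := Nat.cast_pos.2 Module.finrank_pos
  have hq : 0 < q := hp.trans hpq
  have hσ : 0 < σ := by simp only [σ, sub_pos, div_lt_one hq, hpq]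
  have hω₀ : μ (ball 0 1) ≠ 0 := (measure_ball_pos μ 0 one_pos).ne'
  have hω : μ (ball 0 1) ≠ ∞ := measure_ball_lt_top.ne
  have hexp : n + -n / q * p = n * σ := by ring
  have hconst : n * r ^ (n * σ) / (n * σ) = r ^ (n * σ) / σ := by field_simp
  rw [Measure.addHaar_ball_of_pos μ 0 hr, lintegral_ball_norm_rpow μ (by nlinarith) hr.le, hexp,
    hconst, mul_rpow_of_ne_top ofReal_ne_top hω, mul_rpow_of_ne_top ofReal_ne_top hω,
    ← Real.rpow_natCast, ofReal_rpow_of_pos (by positivity), ofReal_rpow_of_pos (by positivity)]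
  have hreal : (r ^ n) ^ (1 / q - 1 / p) * (r ^ (n * σ) / σ) ^ (1 / p) = σ ^ (-(1 : ℝ) / p) := by
    have hzero : n * (1 / q - 1 / p) + n * σ * (1 / p) = 0 := by
      simp only [σ]; field_simp; ring
    rw [Real.div_rpow (by positivity) hσ.le, ← Real.rpow_mul hr.le, ← Real.rpow_mul hr.le,
      mul_div_assoc', ← Real.rpow_add hr, hzero, Real.rpow_zero, neg_div, Real.rpow_neg hσ.le,
      one_div]
  calc _ = ENNReal.ofReal ((r ^ n) ^ (1 / q - 1 / p) * (r ^ (n * σ) / σ) ^ (1 / p)) *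
        (μ (ball 0 1) ^ (1 / q - 1 / p) * μ (ball 0 1) ^ (1 / p)) := by
        rw [ENNReal.ofReal_mul (by positivity)]; ring
    _ = _ := by rw [hreal, ← rpow_add _ _ hω₀ hω, sub_add_cancel, mul_comm]

theorem lintegral_ball_truncatedNormRpow_le {c s R : ℝ} (hs : s ≤ 0) (hc : 0 < c) (hR : 0 < R)
    (a : E) :
    ∫⁻ x in ball a R, ENNReal.ofReal (truncatedNormRpow c s x) ∂μ ≤
      ∫⁻ x in ball 0 (min R c), ENNReal.ofReal (‖x‖ ^ s) ∂μ := by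
  set r := min R c
  have hr : 0 < r := lt_min hR hc
  have hle_indicator : ∀ x : E, ENNReal.ofReal (truncatedNormRpow c s x) ≤
      (ball 0 c).indicator (fun x => ENNReal.ofReal (‖x‖ ^ s)) x := fun x => by
    unfold truncatedNormRpow
    split_ifs with h
    · rw [indicator_of_mem (mem_ball_zero_iff.2 h.2)]
    · simp
  have hmono : Monotone fun ρ => μ (ball (0 : E) ρ) :=
    fun _ _ h => measure_mono (ball_subset_ball h)
  calc _ ≤ ∫⁻ x in ball a R, (ball 0 c).indicator (fun x => ENNReal.ofReal (‖x‖ ^ s)) x ∂μ :=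
        lintegral_mono hle_indicator
    _ = ∫⁻ x in ball 0 c ∩ ball a R, ENNReal.ofReal (‖x‖ ^ s) ∂μ :=
        setLIntegral_indicator measurableSet_ball _
    _ ≤ _ := by
      refine setLIntegral_le_setLIntegral_of_measure_le (c := ENNReal.ofReal (r ^ s))
        (measurableSet_ball.inter measurableSet_ball) measurableSet_ball ?_
        measure_ball_lt_top.ne ?_ ?_
      · exact (le_min ((measure_mono inter_subset_right).trans
          (Measure.addHaar_ball_center μ a R).le) (measure_mono inter_subset_left)).trans_eq
          hmono.map_min.symm
      · rintro x ⟨-, hx⟩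
        have hrx : r ≤ ‖x‖ := by simpa using hx
        exact ofReal_le_ofReal (Real.rpow_le_rpow_of_nonpos hr hrx hs)
      · filter_upwards [Measure.ae_ne μ 0] with x hx0 hx
        exact ofReal_le_ofReal
          (Real.rpow_le_rpow_of_nonpos (norm_pos_iff.2 hx0) (mem_ball_zero_iff.1 hx.1).le hs)

end NormRpow

theorem smallMorreyNorm_truncatedNormRpow {d : ℕ} (hd : 0 < d) {p q c : ℝ} (hp : 0 < p)
    (hpq : p < q) (hc : 0 < c) :
    smallMorreyNorm d p q (truncatedNormRpow c (-(d : ℝ) / q)) =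
      volume (ball (0 : EuclideanSpace ℝ (Fin d)) 1) ^ (1 / q) *
        ENNReal.ofReal ((1 - p / q) ^ (-(1 : ℝ) / p)) := by
  have : Nonempty (Fin d) := ⟨⟨0, hd⟩⟩
  have hs : -(d : ℝ) / q * p < 0 :=
    mul_neg_of_neg_of_pos (div_neg_of_neg_of_pos (neg_neg_of_pos (Nat.cast_pos.2 hd))
      (hp.trans hpq)) hp
  have horigin : ∀ r : ℝ, 0 < r →
      volume (ball (0 : EuclideanSpace ℝ (Fin d)) r) ^ (1 / q - 1 / p) *
        (∫⁻ x in ball (0 : EuclideanSpace ℝ (Fin d)) r,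
          ENNReal.ofReal (‖x‖ ^ (-(d : ℝ) / q * p))) ^ (1 / p) =
      volume (ball (0 : EuclideanSpace ℝ (Fin d)) 1) ^ (1 / q) *
        ENNReal.ofReal ((1 - p / q) ^ (-(1 : ℝ) / p)) := fun r hr => by
    have h := measure_ball_rpow_mul_lintegral_ball_norm_rpow
      (volume : Measure (EuclideanSpace ℝ (Fin d))) hp hpq hr
    rwa [finrank_euclideanSpace_fin] at h
  have hexp : 1 / q - 1 / p ≤ 0 := sub_nonpos.2 (one_div_le_one_div_of_le hp hpq.le)
  simp only [smallMorreyNorm, abs_truncatedNormRpow_rpow hp.ne']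
  refine le_antisymm (iSup_le fun a => iSup_le fun R => iSup_le fun hR => iSup_le fun _ => ?_) ?_
  · rw [← horigin _ (lt_min hR hc)]
    refine mul_le_mul' (rpow_le_rpow_of_nonpos ?_ hexp)
      (rpow_le_rpow (lintegral_ball_truncatedNormRpow_le volume hs.le hc hR a) (by positivity))
    rw [Measure.addHaar_ball_center volume a R]
    exact measure_mono (ball_subset_ball (min_le_left R c))
  · have hr : 0 < min c 1 / 2 := by positivity
    refine le_iSup_of_le 0 (le_iSup_of_le (min c 1 / 2) (le_iSup_of_le hr (le_iSup_of_le
      (by linarith [min_le_right c 1]) ?_)))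
    rw [lintegral_ball_zero_truncatedNormRpow hs.ne (by linarith [min_le_left c 1]), horigin _ hr]

/-- with `f(x) = |x|^{-d/q} χ_{(0,1)}(|x|)` and `g = χ_{(0,ε)}(|·|) f`,
one has `‖g‖_{m^p_q} = ‖f‖_{m^p_q} = (C_d/d)^{1/q}(1-p/q)^{-1/p}` (`C_d/d = |B(0,1)|`). -/
theorem smallMorreyNorm_truncation_eq (d : ℕ) (p q : ℝ) (hp : 1 ≤ p) (hpq : p < q)
    (hd : 1 ≤ d) (ε : ℝ) (hε0 : 0 < ε) (hε1 : ε < 1) :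
    letI f : EuclideanSpace ℝ (Fin d) → ℝ :=
      fun x => if 0 < ‖x‖ ∧ ‖x‖ < 1 then ‖x‖ ^ (-(d : ℝ) / q) else 0
    letI g : EuclideanSpace ℝ (Fin d) → ℝ :=
      fun x => if 0 < ‖x‖ ∧ ‖x‖ < ε then f x else 0
    smallMorreyNorm d p q g = smallMorreyNorm d p q f ∧
      smallMorreyNorm d p q f =
        (volume (ball (0 : EuclideanSpace ℝ (Fin d)) 1)) ^ (1 / q) *
          ENNReal.ofReal ((1 - p / q) ^ (-(1 : ℝ) / p)) := by
  have hg : (fun x : EuclideanSpace ℝ (Fin d) =>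
      if 0 < ‖x‖ ∧ ‖x‖ < ε then truncatedNormRpow 1 (-(d : ℝ) / q) x else 0) =
      truncatedNormRpow ε (-(d : ℝ) / q) := funext fun x => by
    unfold truncatedNormRpow
    by_cases h : 0 < ‖x‖ ∧ ‖x‖ < ε
    · rw [if_pos h, if_pos h, if_pos ⟨h.1, h.2.trans hε1⟩]
    · rw [if_neg h, if_neg h]
  have hp0 : 0 < p := by linarith
  have hf := smallMorreyNorm_truncatedNormRpow hd hp0 hpq one_pos
  exact ⟨(congrArg (smallMorreyNorm d p q) hg).trans
    ((smallMorreyNorm_truncatedNormRpow hd hp0 hpq hε0).trans hf.symm), hf⟩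
end

section
/- Let 1 ≤ p < q < ∞, d ≥ 1, and 0 < ε < 1. Define f(x) = |x|^{-d/q}·χ_{(0,1)}(|x|) and h(x) = χ_{(ε,1)}(|x|)·f(x) on ℝ^d. Then ‖h‖_{m^p_q} ≥ (1 - ε^{d - dp/q})^{1/p} ‖f‖_{m^p_q}, where ‖·‖_{m^p_q} denotes the small Morrey norm. -/
open MeasureTheory Metric ENNReal

open Set Module Filter Topology

/-! With `β = dp/q < d`, the functions `|f|^p` and `|h|^p` are the weight `|x|^(-β)` cut down to
the annuli `a < |x| < 1` with `a = 0` and `a = ε`. Polar coordinates give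
`∫_{B(0,R)} |x|^(-β) χ_{(a,1)}(|x|) dx = C (R^(d-β) - a^(d-β))` for `a ≤ R ≤ 1`, so the Morrey
quotient of the `a`-truncation on `B(0,R)` is `(1 - (a/R)^(d-β))^(1/p) K`, where `K` is the
quotient of `f` on any centred ball. As `|x|^(-β)` decreases radially, `B(0,R)` carries at least
as much of `|f|^p` as any `B(c,R)` (what `B(c,R)` gains outside `B(0,R)` is at most `R^(-β)` per
unit volume, what it loses at least that), hence `‖f‖ ≤ K`; letting `R → 1` in the quotient of `h`
gives `‖h‖ ≥ (1 - ε^(d-β))^(1/p) K`. -/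

theorem setLIntegral_le_setLIntegral_of_measure_eq {α : Type*} [MeasurableSpace α]
    {μ : Measure α} {s t : Set α} {g : α → ℝ≥0∞} {c : ℝ≥0∞} (hs : MeasurableSet s)
    (ht : MeasurableSet t) (hst : μ s = μ t) (ht_fin : μ t ≠ ∞)
    (hgs : ∀ᵐ x ∂μ.restrict (s \ t), g x ≤ c) (hgt : ∀ᵐ x ∂μ.restrict (t \ s), c ≤ g x) :
    ∫⁻ x in s, g x ∂μ ≤ ∫⁻ x in t, g x ∂μ := by
  have hdiff : μ (s \ t) = μ (t \ s) := by
    have hfin : μ (s ∩ t) ≠ ∞ := measure_ne_top_of_subset inter_subset_right ht_fin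
    rw [← measure_inter_add_sdiff s ht, ← measure_inter_add_sdiff t hs, inter_comm t s] at hst
    exact (ENNReal.add_right_inj hfin).mp hst
  calc ∫⁻ x in s, g x ∂μ = ∫⁻ x in s ∩ t, g x ∂μ + ∫⁻ x in s \ t, g x ∂μ :=
        (lintegral_inter_add_sdiff g s ht).symm
    _ ≤ ∫⁻ x in s ∩ t, g x ∂μ + ∫⁻ _ in s \ t, c ∂μ := add_le_add le_rfl (lintegral_mono_ae hgs)
    _ = ∫⁻ x in t ∩ s, g x ∂μ + ∫⁻ _ in t \ s, c ∂μ := by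
        rw [setLIntegral_const, setLIntegral_const, hdiff, inter_comm]
    _ ≤ ∫⁻ x in t ∩ s, g x ∂μ + ∫⁻ x in t \ s, g x ∂μ := add_le_add le_rfl (lintegral_mono_ae hgt)
    _ = ∫⁻ x in t, g x ∂μ := lintegral_inter_add_sdiff g t hs

noncomputable def morreyBallTerm {X : Type*} [PseudoMetricSpace X] [MeasurableSpace X]
    (μ : Measure X) (p q : ℝ) (F : X → ℝ≥0∞) (c : X) (R : ℝ) : ℝ≥0∞ :=
  μ (ball c R) ^ (1 / q - 1 / p) * (∫⁻ y in ball c R, F y ∂μ) ^ (1 / p)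

section Radial

variable {E : Type*} [NormedAddCommGroup E]

noncomputable def truncatedRadialWeight (β a : ℝ) : E → ℝ≥0∞ :=
  ((‖·‖) ⁻¹' Ioo a 1).indicator fun x => ENNReal.ofReal (‖x‖ ^ (-β))

theorem ofReal_abs_ite_rpow_eq_truncatedRadialWeight {F : E → ℝ} {t p a : ℝ} (hp : 0 < p)
    (hF : ∀ x, a < ‖x‖ → ‖x‖ < 1 → F x = ‖x‖ ^ t) (x : E) :
    ENNReal.ofReal (|if a < ‖x‖ ∧ ‖x‖ < 1 then F x else 0| ^ p) =
      truncatedRadialWeight (-(t * p)) a x := by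
  by_cases hx : a < ‖x‖ ∧ ‖x‖ < 1
  · rw [if_pos hx, hF x hx.1 hx.2, truncatedRadialWeight,
      indicator_of_mem (show x ∈ (‖·‖) ⁻¹' Ioo a 1 from hx),
      abs_of_nonneg (Real.rpow_nonneg (norm_nonneg x) _), ← Real.rpow_mul (norm_nonneg x), neg_neg]
  · rw [if_neg hx, truncatedRadialWeight,
      indicator_of_notMem (show x ∉ (‖·‖) ⁻¹' Ioo a 1 from hx), abs_zero,
      Real.zero_rpow hp.ne', ENNReal.ofReal_zero]

variable [NormedSpace ℝ E] [FiniteDimensional ℝ E] [Nontrivial E]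

theorem finrank_sub_finrank_mul_div_pos {p q : ℝ} (hp : 0 < p) (hpq : p < q) :
    0 < (finrank ℝ E : ℝ) - finrank ℝ E * p / q := by
  have hn : (0 : ℝ) < finrank ℝ E := by exact_mod_cast finrank_pos
  rw [sub_pos, div_lt_iff₀ (hp.trans hpq)]
  nlinarith

variable [MeasurableSpace E] [BorelSpace E] (μ : Measure E) [μ.IsAddHaarMeasure]

theorem lintegral_norm_rpow_neg_preimage_Ioo {β a b : ℝ}
    (hβ : β < finrank ℝ E) (ha : 0 ≤ a) (hab : a ≤ b) :
    ∫⁻ x in (‖·‖) ⁻¹' Ioo a b, ENNReal.ofReal (‖x‖ ^ (-β)) ∂μ =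
      ENNReal.ofReal (finrank ℝ E * μ.real (ball 0 1) / (finrank ℝ E - β) *
        (b ^ ((finrank ℝ E : ℝ) - β) - a ^ ((finrank ℝ E : ℝ) - β))) := by
  set n := finrank ℝ E
  have hn : 1 ≤ n := finrank_pos
  set φ : ℝ → ℝ := (Ioo a b).indicator (fun r => r ^ (-β))
  have hradial : ∀ y ∈ Ioi (0 : ℝ), y ^ (n - 1) • φ y =
      (Ioo a b).indicator (fun r => r ^ ((n : ℝ) - β - 1)) y := by
    intro y (hy : 0 < y)
    by_cases hyab : y ∈ Ioo a b
    · simp only [φ, indicator_of_mem hyab, smul_eq_mul]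
      rw [← Real.rpow_natCast, ← Real.rpow_add hy, Nat.cast_sub hn]
      ring_nf
    · simp [φ, indicator_of_notMem hyab]
  have hφ_int : Integrable (fun x : E => φ ‖x‖) μ := by
    rw [integrable_fun_norm_addHaar, integrableOn_congr_fun hradial measurableSet_Ioi,
      IntegrableOn, integrable_indicator_iff measurableSet_Ioo]
    exact (((intervalIntegral.intervalIntegrable_rpow' (by linarith)).1).mono_set
      Ioo_subset_Ioc_self).mono_measure Measure.restrict_le_self
  have hLHS : ∫⁻ x in (‖·‖) ⁻¹' Ioo a b, ENNReal.ofReal (‖x‖ ^ (-β)) ∂μ =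
      ∫⁻ x, ENNReal.ofReal (φ ‖x‖) ∂μ := by
    rw [← lintegral_indicator (measurableSet_Ioo.preimage measurable_norm)]
    congr 1 with x
    by_cases hx : ‖x‖ ∈ Ioo a b
    · simp [φ, indicator_of_mem hx, indicator_of_mem (show x ∈ (‖·‖) ⁻¹' Ioo a b from hx)]
    · simp [φ, indicator_of_notMem hx, indicator_of_notMem (show x ∉ (‖·‖) ⁻¹' Ioo a b from hx)]
  have hφ_nonneg : 0 ≤ᵐ[μ] fun x => φ ‖x‖ :=
    .of_forall fun x => indicator_nonneg (fun r hr => Real.rpow_nonneg (ha.trans hr.1.le) _) _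
  rw [hLHS, ← ofReal_integral_eq_lintegral_ofReal hφ_int hφ_nonneg, integral_fun_norm_addHaar,
    setIntegral_congr_fun measurableSet_Ioi hradial, setIntegral_indicator measurableSet_Ioo,
    inter_eq_right.mpr (Ioo_subset_Ioi_self.trans (Ioi_subset_Ioi ha)),
    ← integral_Ioc_eq_integral_Ioo, ← intervalIntegral.integral_of_le hab,
    integral_rpow (Or.inl (by linarith))]
  congr 1
  simp only [nsmul_eq_mul, smul_eq_mul, n]
  ring_nf

theorem setLIntegral_ball_zero_truncatedRadialWeight {β a R : ℝ} (hβ : β < finrank ℝ E)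
    (ha : 0 ≤ a) (haR : a ≤ R) (hR : R ≤ 1) :
    ∫⁻ x in ball 0 R, truncatedRadialWeight β a x ∂μ =
      ENNReal.ofReal (finrank ℝ E * μ.real (ball 0 1) / (finrank ℝ E - β) *
        (R ^ ((finrank ℝ E : ℝ) - β) - a ^ ((finrank ℝ E : ℝ) - β))) := by
  have hset : (‖·‖) ⁻¹' Ioo a 1 ∩ ball (0 : E) R = (‖·‖) ⁻¹' Ioo a R := by
    ext x
    simp only [mem_inter_iff, mem_ball_zero_iff, mem_preimage, mem_Ioo]
    constructor
    · rintro ⟨⟨hax, -⟩, hxR⟩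
      exact ⟨hax, hxR⟩
    · rintro ⟨hax, hxR⟩
      exact ⟨⟨hax, hxR.trans_le hR⟩, hxR⟩
  rw [truncatedRadialWeight, setLIntegral_indicator (measurableSet_Ioo.preimage measurable_norm),
    hset, lintegral_norm_rpow_neg_preimage_Ioo μ hβ ha haR]

theorem setLIntegral_ball_le_ball_zero_truncatedRadialWeight {β R : ℝ} (hβ : 0 ≤ β)
    (hR0 : 0 < R) (hR1 : R ≤ 1) (c : E) :
    ∫⁻ x in ball c R, truncatedRadialWeight β 0 x ∂μ ≤
      ∫⁻ x in ball 0 R, truncatedRadialWeight β 0 x ∂μ := by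
  refine setLIntegral_le_setLIntegral_of_measure_eq (c := ENNReal.ofReal (R ^ (-β)))
    measurableSet_ball measurableSet_ball (μ.addHaar_ball_center c R) measure_ball_lt_top.ne
    (ae_restrict_of_forall_mem (measurableSet_ball.diff measurableSet_ball) fun x hx => ?_)
    ((ae_restrict_iff' (measurableSet_ball.diff measurableSet_ball)).mpr
      ((μ.ae_ne 0).mono fun x hx0 hx => ?_))
  · have hRx : R ≤ ‖x‖ := by simpa using hx.2
    unfold truncatedRadialWeight
    by_cases hx1 : ‖x‖ ∈ Ioo 0 1
    · rw [indicator_of_mem (show x ∈ (‖·‖) ⁻¹' Ioo 0 1 from hx1)]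
      exact ENNReal.ofReal_le_ofReal
        (Real.rpow_le_rpow_of_nonpos hR0 hRx (neg_nonpos.mpr hβ))
    · rw [indicator_of_notMem (show x ∉ (‖·‖) ⁻¹' Ioo 0 1 from hx1)]
      exact bot_le
  · have hxR : ‖x‖ < R := mem_ball_zero_iff.mp hx.1
    have hx_pos : 0 < ‖x‖ := norm_pos_iff.mpr hx0
    rw [truncatedRadialWeight, indicator_of_mem
      (show x ∈ (‖·‖) ⁻¹' Ioo 0 1 from ⟨hx_pos, hxR.trans_le hR1⟩)]
    exact ENNReal.ofReal_le_ofReal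
      (Real.rpow_le_rpow_of_nonpos hx_pos hxR.le (neg_nonpos.mpr hβ))

theorem morreyBallTerm_ball_zero_truncatedRadialWeight {p q a R : ℝ} (hp : 0 < p) (hpq : p < q)
    (ha : 0 ≤ a) (haR : a ≤ R) (hR0 : 0 < R) (hR1 : R ≤ 1) :
    morreyBallTerm μ p q (truncatedRadialWeight (finrank ℝ E * p / q) a) 0 R =
      ENNReal.ofReal ((1 - (a / R) ^ ((finrank ℝ E : ℝ) - finrank ℝ E * p / q)) ^ (1 / p)) *
        morreyBallTerm μ p q (truncatedRadialWeight (finrank ℝ E * p / q) 0) 0 1 := by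
  set n : ℝ := (finrank ℝ E : ℝ)
  set v : ℝ := μ.real (ball 0 1)
  set α : ℝ := n - n * p / q
  set C : ℝ := n * v / α
  have hn : 0 < n := by simp only [n]; exact_mod_cast finrank_pos
  have hv : 0 < v := ENNReal.toReal_pos (measure_ball_pos μ 0 one_pos).ne' measure_ball_lt_top.ne
  have hα : 0 < α := finrank_sub_finrank_mul_div_pos hp hpq
  have hC : 0 < C := by positivity
  have hβ : n * p / q < n := by linarith
  have value : ∀ {a R : ℝ}, 0 ≤ a → a ≤ R → 0 < R → R ≤ 1 →
      morreyBallTerm μ p q (truncatedRadialWeight (n * p / q) a) 0 R =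
        ENNReal.ofReal ((1 - (a / R) ^ α) ^ (1 / p) * (v ^ (1 / q - 1 / p) * C ^ (1 / p))) := by
    intro a R ha haR hR0 hR1
    have hsplit : R ^ α - a ^ α = R ^ α * (1 - (a / R) ^ α) := by
      rw [Real.div_rpow ha hR0.le, mul_sub, mul_div_cancel₀ _ (by positivity), mul_one]
    have hcancel : (R ^ n) ^ (1 / q - 1 / p) * (R ^ α) ^ (1 / p) = 1 := by
      rw [← Real.rpow_mul hR0.le, ← Real.rpow_mul hR0.le, ← Real.rpow_add hR0]
      convert Real.rpow_zero R using 2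
      simp only [α]
      field_simp
      ring
    have h1 : 0 ≤ 1 - (a / R) ^ α := sub_nonneg.mpr
      (Real.rpow_le_one (div_nonneg ha hR0.le) ((div_le_one hR0).mpr haR) hα.le)
    rw [morreyBallTerm, setLIntegral_ball_zero_truncatedRadialWeight μ hβ ha haR hR1,
      μ.addHaar_ball_of_pos 0 hR0, ← ofReal_measureReal, ← ENNReal.ofReal_mul (by positivity),
      ENNReal.ofReal_rpow_of_pos (by positivity),
      ENNReal.ofReal_rpow_of_nonneg (by rw [hsplit]; positivity) (by positivity),
      ← ENNReal.ofReal_mul (by positivity)]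
    congr 1
    rw [← Real.rpow_natCast, hsplit, Real.mul_rpow (by positivity) hv.le,
      Real.mul_rpow hC.le (by positivity), Real.mul_rpow (by positivity) h1]
    linear_combination (v ^ (1 / q - 1 / p) * C ^ (1 / p) * (1 - (a / R) ^ α) ^ (1 / p)) * hcancel
  rw [value ha haR hR0 hR1, value le_rfl zero_le_one one_pos le_rfl, zero_div,
    Real.zero_rpow hα.ne', sub_zero, Real.one_rpow, one_mul, ENNReal.ofReal_mul' (by positivity)]

theorem morreyBallTerm_truncatedRadialWeight_le_ball_zero {β p q R : ℝ} (hp : 0 < p)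
    (hβ : 0 ≤ β) (hR0 : 0 < R) (hR1 : R ≤ 1) (c : E) :
    morreyBallTerm μ p q (truncatedRadialWeight β 0) c R ≤
      morreyBallTerm μ p q (truncatedRadialWeight β 0) 0 R := by
  rw [morreyBallTerm, morreyBallTerm, μ.addHaar_ball_center c R]
  exact mul_le_mul_right (ENNReal.rpow_le_rpow
    (setLIntegral_ball_le_ball_zero_truncatedRadialWeight μ hβ hR0 hR1 c) (by positivity)) _

theorem iSup_morreyBallTerm_truncatedRadialWeight_le {p q : ℝ} (hp : 0 < p) (hpq : p < q) :
    ⨆ (c : E) (R : ℝ) (_ : 0 < R) (_ : R < 1),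
        morreyBallTerm μ p q (truncatedRadialWeight (finrank ℝ E * p / q) 0) c R ≤
      morreyBallTerm μ p q (truncatedRadialWeight (finrank ℝ E * p / q) 0) 0 1 := by
  have hα := finrank_sub_finrank_mul_div_pos (E := E) hp hpq
  refine iSup₂_le fun c R => iSup₂_le fun hR0 hR1 => ?_
  calc _ ≤ morreyBallTerm μ p q (truncatedRadialWeight (finrank ℝ E * p / q) 0) 0 R :=
        morreyBallTerm_truncatedRadialWeight_le_ball_zero μ hp
          (div_nonneg (by positivity) (hp.trans hpq).le) hR0 hR1.le c
    _ = _ := by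
        rw [morreyBallTerm_ball_zero_truncatedRadialWeight μ hp hpq le_rfl hR0.le hR0 hR1.le,
          zero_div, Real.zero_rpow hα.ne', sub_zero, Real.one_rpow, ENNReal.ofReal_one, one_mul]

theorem le_iSup_morreyBallTerm_truncatedRadialWeight {p q ε : ℝ} (hp : 0 < p) (hpq : p < q)
    (hε0 : 0 < ε) (hε1 : ε < 1) :
    ENNReal.ofReal ((1 - ε ^ ((finrank ℝ E : ℝ) - finrank ℝ E * p / q)) ^ (1 / p)) *
        morreyBallTerm μ p q (truncatedRadialWeight (finrank ℝ E * p / q) 0) 0 1 ≤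
      ⨆ (c : E) (R : ℝ) (_ : 0 < R) (_ : R < 1),
        morreyBallTerm μ p q (truncatedRadialWeight (finrank ℝ E * p / q) ε) c R := by
  set α : ℝ := (finrank ℝ E : ℝ) - finrank ℝ E * p / q
  set K := morreyBallTerm μ p q (truncatedRadialWeight (finrank ℝ E * p / q) 0) 0 1
  have hα : 0 < α := finrank_sub_finrank_mul_div_pos hp hpq
  have hlim : Tendsto (fun R => ENNReal.ofReal ((1 - (ε / R) ^ α) ^ (1 / p)) * K) (𝓝[<] 1)
      (𝓝 (ENNReal.ofReal ((1 - ε ^ α) ^ (1 / p)) * K)) := by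
    have hcont : ContinuousAt (fun R : ℝ => (1 - (ε / R) ^ α) ^ (1 / p)) 1 :=
      (continuousAt_const.sub ((continuousAt_const.div continuousAt_id one_ne_zero).rpow_const
        (Or.inr hα.le))).rpow_const (Or.inr (by positivity))
    have hpos : ENNReal.ofReal ((1 - ε ^ α) ^ (1 / p)) ≠ 0 :=
      (ENNReal.ofReal_pos.mpr (Real.rpow_pos_of_pos
        (sub_pos.mpr (Real.rpow_lt_one hε0.le hε1 hα)) _)).ne'
    have := ENNReal.Tendsto.mul_const (b := K)
      ((ENNReal.continuous_ofReal.tendsto _).comp hcont.tendsto) (Or.inl (by simpa using hpos))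
    simpa only [div_one, Function.comp_def] using this.mono_left nhdsWithin_le_nhds
  refine le_of_tendsto hlim (Filter.mem_of_superset (Ioo_mem_nhdsLT hε1) fun R ⟨hεR, hR1⟩ => ?_)
  have hR0 : 0 < R := hε0.trans hεR
  exact (morreyBallTerm_ball_zero_truncatedRadialWeight μ hp hpq hε0.le hεR.le hR0 hR1.le).ge.trans
    (le_iSup₂_of_le (0 : E) R (le_iSup₂_of_le hR0 hR1 le_rfl))

end Radial

theorem smallMorreyNorm_eq_iSup_morreyBallTerm (d : ℕ) (p q : ℝ)
    (f : EuclideanSpace ℝ (Fin d) → ℝ) :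
    smallMorreyNorm d p q f = ⨆ (c : EuclideanSpace ℝ (Fin d)) (R : ℝ) (_ : 0 < R) (_ : R < 1),
      morreyBallTerm volume p q (fun y => ENNReal.ofReal (|f y| ^ p)) c R :=
  rfl

/-- with `f(x) = |x|^{-d/q} χ_{(0,1)}(|x|)` and `h = χ_{(ε,1)}(|·|) f`,
one has `‖h‖_{m^p_q} ≥ (1 - ε^{d - dp/q})^{1/p} ‖f‖_{m^p_q}`. -/
theorem smallMorreyNorm_outer_truncation_lower (d : ℕ) (p q : ℝ) (hp : 1 ≤ p)
    (hpq : p < q) (hd : 1 ≤ d) (ε : ℝ) (hε0 : 0 < ε) (hε1 : ε < 1) :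
    letI f : EuclideanSpace ℝ (Fin d) → ℝ :=
      fun x => if 0 < ‖x‖ ∧ ‖x‖ < 1 then ‖x‖ ^ (-(d : ℝ) / q) else 0
    letI h : EuclideanSpace ℝ (Fin d) → ℝ :=
      fun x => if ε < ‖x‖ ∧ ‖x‖ < 1 then f x else 0
    ENNReal.ofReal ((1 - ε ^ ((d : ℝ) - d * p / q)) ^ (1 / p)) *
        smallMorreyNorm d p q f ≤ smallMorreyNorm d p q h := by
  set f : EuclideanSpace ℝ (Fin d) → ℝ :=
    fun x => if 0 < ‖x‖ ∧ ‖x‖ < 1 then ‖x‖ ^ (-(d : ℝ) / q) else 0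
  have : Nonempty (Fin d) := ⟨⟨0, hd⟩⟩
  have hp0 : 0 < p := zero_lt_one.trans_le hp
  have hexp : -(-(d : ℝ) / q * p) = d * p / q := by ring
  have hf : (fun y => ENNReal.ofReal (|f y| ^ p)) = truncatedRadialWeight ((d : ℝ) * p / q) 0 := by
    ext y
    rw [← hexp]
    exact ofReal_abs_ite_rpow_eq_truncatedRadialWeight hp0 (fun _ _ _ => rfl) y
  have hh : (fun y => ENNReal.ofReal (|if ε < ‖y‖ ∧ ‖y‖ < 1 then f y else 0| ^ p)) =
      truncatedRadialWeight ((d : ℝ) * p / q) ε := by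
    ext y
    rw [← hexp]
    exact ofReal_abs_ite_rpow_eq_truncatedRadialWeight (F := f) hp0
      (fun x hx hx1 => if_pos ⟨hε0.trans hx, hx1⟩) y
  simp only [smallMorreyNorm_eq_iSup_morreyBallTerm]
  rw [hf, hh]
  have hupper := iSup_morreyBallTerm_truncatedRadialWeight_le
    (volume : Measure (EuclideanSpace ℝ (Fin d))) hp0 hpq
  have hlower := le_iSup_morreyBallTerm_truncatedRadialWeight
    (volume : Measure (EuclideanSpace ℝ (Fin d))) hp0 hpq hε0 hε1
  rw [finrank_euclideanSpace_fin] at hupper hlower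
  exact (mul_le_mul_right hupper _).trans hlower
end

section
/- Let 1 ≤ p < q < ∞, d ≥ 1, 0 < ε < 1, and 0 < δ < 1. With f(x) = |x|^{-d/q}·χ_{(0,1)}(|x|), g(x) = χ_{(0,ε)}(|x|)f(x), h(x) = χ_{(ε,1)}(|x|)f(x), define l = (1+δ)g + (1−δ)h. Then the small Morrey norm satisfies ‖l‖_{m^p_q} = (1+δ)‖f‖_{m^p_q}. -/
open MeasureTheory Metric ENNReal

/-!
The profile `f = |x|^{-d/q}` on the punctured unit ball is radially decreasing, so by the
layer-cake formula its `L^p` mass on a ball `B(a, R)` is at most its mass on `B(0, R)`; and by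
scaling, the Morrey quotient on `B(0, R)` is the same for every `R ≤ 1`. So the small Morrey norm
of `f` is attained on every centred ball. Since `|l| ≤ (1 + δ) |f|` everywhere, with equality on
`B(0, ε)`, the same ball computes the norm of `l`, which is `(1 + δ)` times that of `f`.
-/

open Set Module

/-- The origin is exempt: the profiles below blow up there but take the junk value `0` at it. -/
def RadiallyAntitone {E : Type*} [Norm E] [Zero E] (F : E → ℝ) : Prop :=
  ∀ ⦃x y : E⦄, x ≠ 0 → ‖x‖ ≤ ‖y‖ → F y ≤ F x

section BallComparison

variable {E : Type*} [NormedAddCommGroup E] [MeasurableSpace E] [BorelSpace E]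
  {μ : Measure E} [μ.IsAddLeftInvariant] [NullSingletonClass μ] {F : E → ℝ}

/-- A superlevel set of a radially antitone function either lies inside `ball 0 R` or contains
it up to the origin; in both cases `ball 0 R` captures at least as much of it as `ball a R`. -/
theorem RadiallyAntitone.measure_superlevel_inter_ball_le (hF : RadiallyAntitone F) (t : ℝ)
    (a : E) (R : ℝ) : μ ({y | t < F y} ∩ ball a R) ≤ μ ({y | t < F y} ∩ ball 0 R) := by
  by_cases hS : ∃ y, t < F y ∧ R ≤ ‖y‖
  · obtain ⟨y, hty, hRy⟩ := hS
    have hsub : ball (0 : E) R \ {0} ⊆ {y | t < F y} ∩ ball 0 R := fun x hx =>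
      ⟨hty.trans_le (hF hx.2 ((mem_ball_zero_iff.1 hx.1).le.trans hRy)), hx.1⟩
    have hball : ball (0 : E) R = (a + ·) ⁻¹' ball a R := by simp [preimage_add_ball]
    calc μ ({y | t < F y} ∩ ball a R) ≤ μ (ball a R) := measure_mono inter_subset_right
      _ = μ (ball 0 R \ {0}) := by
        rw [measure_sdiff_null (measure_singleton 0), hball, measure_preimage_add]
      _ ≤ μ ({y | t < F y} ∩ ball 0 R) := measure_mono hsub
  · push Not at hS
    have hsub : {y | t < F y} ⊆ ball (0 : E) R := fun y hy => mem_ball_zero_iff.2 (hS y hy)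
    rw [inter_eq_left.2 hsub]
    exact measure_mono inter_subset_left

theorem RadiallyAntitone.setLIntegral_ball_le (hF : RadiallyAntitone F) (hF_nonneg : 0 ≤ F)
    (hF_meas : Measurable F) (a : E) (R : ℝ) :
    ∫⁻ y in ball a R, ENNReal.ofReal (F y) ∂μ ≤ ∫⁻ y in ball 0 R, ENNReal.ofReal (F y) ∂μ := by
  simp only [lintegral_eq_lintegral_meas_lt _ (ae_of_all _ hF_nonneg) hF_meas.aemeasurable,
    Measure.restrict_apply (measurableSet_lt measurable_const hF_meas)]
  exact lintegral_mono fun t => hF.measure_superlevel_inter_ball_le t a R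

end BallComparison

section Scaling

variable {E : Type*} [NormedAddCommGroup E] [NormedSpace ℝ E] [FiniteDimensional ℝ E]
  [MeasurableSpace E] [BorelSpace E] (μ : Measure E) [μ.IsAddHaarMeasure]

theorem setLIntegral_ball_eq_smul {F : E → ℝ≥0∞} (hF : Measurable F) {R : ℝ} (hR : 0 < R) :
    ∫⁻ y in ball 0 R, F y ∂μ
      = ENNReal.ofReal (R ^ finrank ℝ E) * ∫⁻ x in ball 0 1, F (R • x) ∂μ := by
  have hpre : (R • · : E → E) ⁻¹' ball 0 R = ball 0 1 := by
    ext x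
    simp [norm_smul, abs_of_pos hR, mul_lt_iff_lt_one_right hR]
  rw [← hpre, ← setLIntegral_map measurableSet_ball hF (measurable_const_smul R),
    Measure.map_addHaar_smul μ hR.ne', Measure.restrict_smul, lintegral_smul_measure,
    smul_eq_mul, ← mul_assoc, ← ENNReal.ofReal_mul (by positivity),
    abs_of_pos (by positivity), mul_inv_cancel₀ (by positivity), ENNReal.ofReal_one, one_mul]

end Scaling

section CutoffRpow

variable {E : Type*} [NormedAddCommGroup E]

noncomputable def cutoffRpow (s : ℝ) (x : E) : ℝ :=
  if 0 < ‖x‖ ∧ ‖x‖ < 1 then ‖x‖ ^ s else 0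

theorem cutoffRpow_nonneg (s : ℝ) (x : E) : 0 ≤ cutoffRpow s x := by
  unfold cutoffRpow
  split_ifs <;> positivity

theorem measurable_cutoffRpow [MeasurableSpace E] [BorelSpace E] (s : ℝ) :
    Measurable (cutoffRpow s : E → ℝ) :=
  Measurable.ite ((measurableSet_lt measurable_const measurable_norm).inter
    (measurableSet_lt measurable_norm measurable_const))
    ((measurable_norm (α := E)).pow_const s) measurable_const

theorem abs_cutoffRpow_rpow {p : ℝ} (hp : 0 < p) (s : ℝ) (x : E) :
    |cutoffRpow s x| ^ p = cutoffRpow (s * p) x := by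
  unfold cutoffRpow
  split_ifs
  · rw [abs_of_nonneg (by positivity), ← Real.rpow_mul (norm_nonneg x)]
  · simp [Real.zero_rpow hp.ne']

theorem radiallyAntitone_cutoffRpow {s : ℝ} (hs : s ≤ 0) :
    RadiallyAntitone (cutoffRpow s : E → ℝ) := by
  intro x y hx hxy
  have hx0 : 0 < ‖x‖ := norm_pos_iff.2 hx
  unfold cutoffRpow
  split_ifs with hy hx'
  · exact Real.rpow_le_rpow_of_nonpos hx0 hxy hs
  · exact absurd ⟨hx0, hxy.trans_lt hy.2⟩ hx'
  · positivity
  · exact le_rfl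

theorem cutoffRpow_smul [NormedSpace ℝ E] (s : ℝ) {r : ℝ} (hr0 : 0 < r) (hr1 : r ≤ 1) {x : E}
    (hx : ‖x‖ < 1) : cutoffRpow s (r • x) = r ^ s * cutoffRpow s x := by
  unfold cutoffRpow
  rw [norm_smul, Real.norm_of_nonneg hr0.le]
  rcases (norm_nonneg x).eq_or_lt with hx0 | hx0
  · simp [← hx0]
  · rw [if_pos ⟨by positivity, by nlinarith⟩, if_pos ⟨hx0, hx⟩, Real.mul_rpow hr0.le hx0.le]

theorem setLIntegral_ball_cutoffRpow [NormedSpace ℝ E] [FiniteDimensional ℝ E]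
    [MeasurableSpace E] [BorelSpace E] (μ : Measure E) [μ.IsAddHaarMeasure] (s : ℝ) {R : ℝ}
    (hR0 : 0 < R) (hR1 : R ≤ 1) :
    ∫⁻ y in ball 0 R, ENNReal.ofReal (cutoffRpow s y) ∂μ
      = ENNReal.ofReal (R ^ (finrank ℝ E + s))
        * ∫⁻ y in ball 0 1, ENNReal.ofReal (cutoffRpow s y) ∂μ := by
  rw [setLIntegral_ball_eq_smul μ (measurable_cutoffRpow (E := E) s).ennreal_ofReal hR0,
    Real.rpow_add hR0, Real.rpow_natCast, ENNReal.ofReal_mul (by positivity), mul_assoc]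
  congr 1
  rw [← lintegral_const_mul' _ _ ENNReal.ofReal_ne_top]
  refine setLIntegral_congr_fun (measurableSet_ball (x := (0 : E))) fun x hx => ?_
  rw [cutoffRpow_smul s hR0 hR1 (mem_ball_zero_iff.1 hx), ENNReal.ofReal_mul (by positivity)]

end CutoffRpow

section MorreyTerm

variable {d : ℕ} {p q : ℝ}

noncomputable def morreyTerm (d : ℕ) (p q : ℝ) (f : EuclideanSpace ℝ (Fin d) → ℝ)
    (a : EuclideanSpace ℝ (Fin d)) (R : ℝ) : ℝ≥0∞ :=
  volume (ball a R) ^ (1 / q - 1 / p) *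
    (∫⁻ y in ball a R, ENNReal.ofReal (|f y| ^ p)) ^ (1 / p)

theorem smallMorreyNorm_eq_of_le_of_eq {f : EuclideanSpace ℝ (Fin d) → ℝ} {C : ℝ≥0∞}
    (hle : ∀ a R, 0 < R → R < 1 → morreyTerm d p q f a R ≤ C) {a : EuclideanSpace ℝ (Fin d)}
    {R : ℝ} (hR0 : 0 < R) (hR1 : R < 1) (hC : morreyTerm d p q f a R = C) :
    smallMorreyNorm d p q f = C :=
  le_antisymm (iSup_le fun a => iSup_le fun R => iSup_le fun hR0 => iSup_le fun hR1 =>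
      hle a R hR0 hR1)
    (hC ▸ le_iSup_of_le a (le_iSup_of_le R (le_iSup_of_le hR0 (le_iSup_of_le hR1 le_rfl))))

theorem morreyTerm_mono {f g : EuclideanSpace ℝ (Fin d) → ℝ} (hp : 0 < p)
    (hgf : ∀ y, |g y| ≤ |f y|) (a : EuclideanSpace ℝ (Fin d)) (R : ℝ) :
    morreyTerm d p q g a R ≤ morreyTerm d p q f a R := by
  unfold morreyTerm
  gcongr _ * ?_ ^ _
  exact lintegral_mono fun y =>
    ENNReal.ofReal_le_ofReal (Real.rpow_le_rpow (abs_nonneg _) (hgf y) hp.le)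

theorem morreyTerm_const_mul (hp : 0 < p) (c : ℝ) (f : EuclideanSpace ℝ (Fin d) → ℝ)
    (a : EuclideanSpace ℝ (Fin d)) (R : ℝ) :
    morreyTerm d p q (fun x => c * f x) a R = ENNReal.ofReal |c| * morreyTerm d p q f a R := by
  unfold morreyTerm
  simp_rw [abs_mul, Real.mul_rpow (abs_nonneg c) (abs_nonneg _),
    ENNReal.ofReal_mul (by positivity : 0 ≤ |c| ^ p)]
  rw [lintegral_const_mul' _ _ ENNReal.ofReal_ne_top,
    ENNReal.mul_rpow_of_nonneg _ _ (by positivity : 0 ≤ 1 / p),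
    ENNReal.ofReal_rpow_of_nonneg (by positivity) (by positivity),
    ← Real.rpow_mul (abs_nonneg c), mul_one_div_cancel hp.ne', Real.rpow_one]
  ring

theorem morreyTerm_congr {f g : EuclideanSpace ℝ (Fin d) → ℝ} {a : EuclideanSpace ℝ (Fin d)}
    {R : ℝ} (hfg : EqOn f g (ball a R)) : morreyTerm d p q f a R = morreyTerm d p q g a R := by
  unfold morreyTerm
  rw [setLIntegral_congr_fun measurableSet_ball fun y hy => by rw [hfg hy]]

theorem morreyTerm_cutoffRpow_le_centered [NeZero d] (hp : 0 < p) {s : ℝ} (hs : s ≤ 0)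
    (a : EuclideanSpace ℝ (Fin d)) (R : ℝ) :
    morreyTerm d p q (cutoffRpow s) a R ≤ morreyTerm d p q (cutoffRpow s) 0 R := by
  unfold morreyTerm
  simp_rw [abs_cutoffRpow_rpow hp, Measure.addHaar_ball_center volume a R]
  gcongr _ * ?_ ^ _
  exact (radiallyAntitone_cutoffRpow (mul_nonpos_of_nonpos_of_nonneg hs hp.le)).setLIntegral_ball_le
    (μ := volume) (cutoffRpow_nonneg _) (measurable_cutoffRpow _) a R

/-- Scale invariance: the exponent `-d/q` is exactly the one for which the `R`-powers coming from
the volume and from the integral cancel. -/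
theorem morreyTerm_cutoffRpow_centered_eq (hp : 0 < p) {R : ℝ} (hR0 : 0 < R) (hR1 : R ≤ 1) :
    morreyTerm d p q (cutoffRpow (-(d : ℝ) / q)) 0 R
      = morreyTerm d p q (cutoffRpow (-(d : ℝ) / q)) 0 1 := by
  unfold morreyTerm
  simp_rw [abs_cutoffRpow_rpow hp]
  rw [setLIntegral_ball_cutoffRpow volume _ hR0 hR1, Measure.addHaar_ball_of_pos _ _ hR0,
    finrank_euclideanSpace_fin, ← Real.rpow_natCast,
    ENNReal.mul_rpow_of_ne_zero (by positivity) (measure_ball_pos _ _ one_pos).ne',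
    ENNReal.mul_rpow_of_nonneg _ _ (by positivity : 0 ≤ 1 / p)]
  have hcancel : ENNReal.ofReal (R ^ (d : ℝ)) ^ (1 / q - 1 / p)
      * ENNReal.ofReal (R ^ ((d : ℝ) + -(d : ℝ) / q * p)) ^ (1 / p) = 1 := by
    rw [ENNReal.ofReal_rpow_of_pos (by positivity), ENNReal.ofReal_rpow_of_pos (by positivity),
      ← Real.rpow_mul hR0.le, ← Real.rpow_mul hR0.le, ← ENNReal.ofReal_mul (by positivity),
      ← Real.rpow_add hR0]
    convert ENNReal.ofReal_one
    convert Real.rpow_zero R using 2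
    field_simp
    ring
  rw [mul_mul_mul_comm, hcancel, one_mul]

theorem morreyTerm_cutoffRpow_le [NeZero d] (hp : 0 < p) (hq : 0 ≤ q)
    (a : EuclideanSpace ℝ (Fin d)) {R : ℝ} (hR0 : 0 < R) (hR1 : R ≤ 1) :
    morreyTerm d p q (cutoffRpow (-(d : ℝ) / q)) a R
      ≤ morreyTerm d p q (cutoffRpow (-(d : ℝ) / q)) 0 1 :=
  (morreyTerm_cutoffRpow_le_centered hp (div_nonpos_of_nonpos_of_nonneg (by simp) hq) a R).trans
    (morreyTerm_cutoffRpow_centered_eq hp hR0 hR1).le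

theorem smallMorreyNorm_eq_of_abs_le_of_eqOn [NeZero d] (hp : 0 < p) (hq : 0 ≤ q) {c ε : ℝ}
    (hc : 0 ≤ c) (hε0 : 0 < ε) (hε1 : ε < 1) {l : EuclideanSpace ℝ (Fin d) → ℝ}
    (hle : ∀ x, |l x| ≤ c * |cutoffRpow (-(d : ℝ) / q) x|)
    (heq : EqOn l (fun x => c * cutoffRpow (-(d : ℝ) / q) x) (ball 0 ε)) :
    smallMorreyNorm d p q l
      = ENNReal.ofReal c * smallMorreyNorm d p q (cutoffRpow (-(d : ℝ) / q)) := by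
  have hcf : ∀ a R, morreyTerm d p q (fun x => c * cutoffRpow (-(d : ℝ) / q) x) a R
      = ENNReal.ofReal c * morreyTerm d p q (cutoffRpow (-(d : ℝ) / q)) a R := fun a R => by
    rw [morreyTerm_const_mul hp, abs_of_nonneg hc]
  rw [smallMorreyNorm_eq_of_le_of_eq
    (fun a R hR0 hR1 => morreyTerm_cutoffRpow_le hp hq a hR0 hR1.le) hε0 hε1
    (morreyTerm_cutoffRpow_centered_eq hp hε0 hε1.le)]
  refine smallMorreyNorm_eq_of_le_of_eq (a := 0) (fun a R hR0 hR1 => ?_) hε0 hε1 ?_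
  · calc morreyTerm d p q l a R
        ≤ morreyTerm d p q (fun x => c * cutoffRpow (-(d : ℝ) / q) x) a R :=
          morreyTerm_mono hp (fun x => (hle x).trans_eq (by rw [abs_mul, abs_of_nonneg hc])) a R
      _ ≤ ENNReal.ofReal c * morreyTerm d p q (cutoffRpow (-(d : ℝ) / q)) 0 1 := by
          rw [hcf]
          gcongr
          exact morreyTerm_cutoffRpow_le hp hq a hR0 hR1.le
  · rw [morreyTerm_congr heq, hcf, morreyTerm_cutoffRpow_centered_eq hp hε0 hε1.le]

end MorreyTerm

theorem abs_mul_ite_add_mul_ite_le {P Q : Prop} [Decidable P] [Decidable Q] (hPQ : ¬(P ∧ Q))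
    {a b v : ℝ} (hba : |b| ≤ a) :
    |a * (if P then v else 0) + b * (if Q then v else 0)| ≤ a * |v| := by
  have ha : 0 ≤ a := (abs_nonneg b).trans hba
  split_ifs with hP hQ
  · exact absurd ⟨hP, hQ⟩ hPQ
  · rw [mul_zero, add_zero, abs_mul, abs_of_nonneg ha]
  · rw [mul_zero, zero_add, abs_mul]
    exact mul_le_mul_of_nonneg_right hba (abs_nonneg v)
  · simp only [mul_zero, add_zero, abs_zero]
    positivity

theorem smallMorreyNorm_l_eq_general (d : ℕ) (p q : ℝ) (hp : 1 ≤ p) (hpq : p < q)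
    (hd : 1 ≤ d) (ε δ : ℝ) (hε0 : 0 < ε) (hε1 : ε < 1) (hδ0 : 0 < δ) :
    letI f : EuclideanSpace ℝ (Fin d) → ℝ :=
      fun x => if 0 < ‖x‖ ∧ ‖x‖ < 1 then ‖x‖ ^ (-(d : ℝ) / q) else 0
    letI g : EuclideanSpace ℝ (Fin d) → ℝ :=
      fun x => if 0 < ‖x‖ ∧ ‖x‖ < ε then f x else 0
    letI h : EuclideanSpace ℝ (Fin d) → ℝ :=
      fun x => if ε < ‖x‖ ∧ ‖x‖ < 1 then f x else 0
    letI l : EuclideanSpace ℝ (Fin d) → ℝ :=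
      fun x => (1 + δ) * g x + (1 - δ) * h x
    smallMorreyNorm d p q l = ENNReal.ofReal (1 + δ) * smallMorreyNorm d p q f := by
  have : NeZero d := ⟨by omega⟩
  refine smallMorreyNorm_eq_of_abs_le_of_eqOn (by linarith) (by linarith) (by linarith) hε0 hε1
    (fun x => ?_) (fun x hx => ?_)
  · exact abs_mul_ite_add_mul_ite_le (fun h => (h.1.2.trans h.2.1).false)
      (abs_le.2 ⟨by linarith, by linarith⟩)
  · have hxε : ‖x‖ < ε := mem_ball_zero_iff.1 hx
    beta_reduce
    rw [if_neg (show ¬(ε < ‖x‖ ∧ ‖x‖ < 1) from fun h => (hxε.trans h.1).false), mul_zero,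
      add_zero]
    rcases (norm_nonneg x).eq_or_lt with hx0 | hx0
    · simp [cutoffRpow, ← hx0]
    · rw [if_pos ⟨hx0, hxε⟩]
      rfl

/-- with `f(x) = |x|^{-d/q} χ_{(0,1)}(|x|)`, `g = χ_{(0,ε)}(|·|) f`,
`h = χ_{(ε,1)}(|·|) f` and `l = (1+δ) g + (1-δ) h`, one has
`‖l‖_{m^p_q} = (1+δ) ‖f‖_{m^p_q}`. -/
theorem smallMorreyNorm_l_eq (d : ℕ) (p q : ℝ) (hp : 1 ≤ p) (hpq : p < q)
    (hd : 1 ≤ d) (ε δ : ℝ) (hε0 : 0 < ε) (hε1 : ε < 1) (hδ0 : 0 < δ) (hδ1 : δ < 1) :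
    letI f : EuclideanSpace ℝ (Fin d) → ℝ :=
      fun x => if 0 < ‖x‖ ∧ ‖x‖ < 1 then ‖x‖ ^ (-(d : ℝ) / q) else 0
    letI g : EuclideanSpace ℝ (Fin d) → ℝ :=
      fun x => if 0 < ‖x‖ ∧ ‖x‖ < ε then f x else 0
    letI h : EuclideanSpace ℝ (Fin d) → ℝ :=
      fun x => if ε < ‖x‖ ∧ ‖x‖ < 1 then f x else 0
    letI l : EuclideanSpace ℝ (Fin d) → ℝ :=
      fun x => (1 + δ) * g x + (1 - δ) * h x
    smallMorreyNorm d p q l = ENNReal.ofReal (1 + δ) * smallMorreyNorm d p q f :=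
  smallMorreyNorm_l_eq_general d p q hp hpq hd ε δ hε0 hε1 hδ0
end

section
/- Let 1 ≤ p < q < ∞, d ≥ 1, and 0 < ε < 1. With f(x) = |x|^{-d/q}·χ_{(0,1)}(|x|) and k(x) = [χ_{(0,ε)}(|x|) − χ_{(ε,1)}(|x|)]f(x), one has ‖f‖_{m^p_q} = ‖k‖_{m^p_q} and min{‖f+k‖_{m^p_q}, ‖f−k‖_{m^p_q}} ≥ 2(1 − ε^{d−dp/q})^{1/p} ‖f‖_{m^p_q}. -/
open MeasureTheory Metric ENNReal

open Set Module Filter Topology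

/-!
For `c = dp/q < d` the weight `|x|^{-c} = |f|^p` is integrable near `0`, and the Morrey functional
of `|x|^{-d/q}` on `B(0,R)` does not depend on `R`: scaling multiplies `∫_{B(0,R)} |x|^{-c}` by
`R^{d-c}`, which cancels `|B(0,R)|^{1/q-1/p}`. Since `|x|^{-c}` is radially decreasing, a centred
ball carries at least as much of it as any translate (exchange `B(a,R) \ B(0,R)` against
`B(0,R) \ B(a,R)`, which have equal measure), so this common value `K` bounds `‖f‖`.
As `|k| = |f|` off the sphere `|x| = ε`, `‖k‖ = ‖f‖`. Finally `f + k = 2f` on `B(0,ε)`, so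
`‖f + k‖ ≥ 2K`, and `f - k = 2f` on `B(0,R) \ B(0,ε)`, so `‖f - k‖ ≥ 2(1 - (ε/R)^{d-c})^{1/p} K`;
let `R → 1`.
-/

section Exchange

variable {α : Type*} [MeasurableSpace α] {μ : Measure α}

theorem setLIntegral_le_of_measure_eq {S T : Set α} {g : α → ℝ≥0∞} (v : ℝ≥0∞)
    (hS : MeasurableSet S) (hT : MeasurableSet T) (hST : μ S = μ T) (hT_fin : μ T ≠ ∞)
    (hle : ∀ x ∈ S \ T, g x ≤ v) (hge : ∀ x ∈ T \ S, v ≤ g x) :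
    ∫⁻ x in S, g x ∂μ ≤ ∫⁻ x in T, g x ∂μ := by
  have hdiff : μ (S \ T) = μ (T \ S) := by
    have hfin : μ (S ∩ T) ≠ ∞ := measure_ne_top_of_subset inter_subset_right hT_fin
    rw [← ENNReal.add_right_inj hfin, measure_inter_add_sdiff _ hT, inter_comm,
      measure_inter_add_sdiff _ hS, hST]
  calc ∫⁻ x in S, g x ∂μ = ∫⁻ x in S ∩ T, g x ∂μ + ∫⁻ x in S \ T, g x ∂μ :=
        (lintegral_inter_add_sdiff g S hT).symm
    _ ≤ ∫⁻ x in T ∩ S, g x ∂μ + ∫⁻ x in T \ S, g x ∂μ := by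
        rw [inter_comm]
        gcongr ∫⁻ x in T ∩ S, g x ∂μ + ?_
        calc ∫⁻ x in S \ T, g x ∂μ ≤ ∫⁻ _ in S \ T, v ∂μ := setLIntegral_mono' (hS.diff hT) hle
          _ = ∫⁻ _ in T \ S, v ∂μ := by rw [setLIntegral_const, setLIntegral_const, hdiff]
          _ ≤ ∫⁻ x in T \ S, g x ∂μ := setLIntegral_mono' (hT.diff hS) hge
    _ = ∫⁻ x in T, g x ∂μ := lintegral_inter_add_sdiff g T hS

end Exchange

section RadialPower

variable {E : Type*} [SeminormedAddCommGroup E]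

-- `‖0‖ₑ ^ (-c) = ∞`, so no exception is needed at the origin.
theorem indicator_ball_enorm_rpow_neg_le_of_norm_le {c : ℝ} (hc : 0 ≤ c) (r : ℝ) {x y : E}
    (hxy : ‖x‖ ≤ ‖y‖) :
    (ball (0 : E) r).indicator (‖·‖ₑ ^ (-c)) y ≤ (ball (0 : E) r).indicator (‖·‖ₑ ^ (-c)) x := by
  by_cases hy : y ∈ ball (0 : E) r
  · have hx : x ∈ ball (0 : E) r := mem_ball_zero_iff.mpr (hxy.trans_lt (mem_ball_zero_iff.mp hy))
    rw [indicator_of_mem hy, indicator_of_mem hx, ENNReal.rpow_neg, ENNReal.rpow_neg]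
    gcongr
    exact enorm_le_iff_norm_le.mpr hxy
  · rw [indicator_of_notMem hy]
    exact zero_le

end RadialPower

section HaarBalls

variable {E : Type*} [NormedAddCommGroup E] [NormedSpace ℝ E] [FiniteDimensional ℝ E]
  [MeasurableSpace E] [BorelSpace E] (μ : Measure E) [μ.IsAddHaarMeasure]

theorem ae_norm_ne [Nontrivial E] (r : ℝ) : ∀ᵐ x ∂μ, ‖x‖ ≠ r := by
  refine measure_mono_null (fun x hx => ?_) (Measure.addHaar_sphere μ 0 r)
  simpa using hx

theorem setLIntegral_ball_le_setLIntegral_ball_zero_s9 {g : E → ℝ≥0∞}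
    (hg : ∀ x y : E, ‖x‖ ≤ ‖y‖ → g y ≤ g x) (a : E) (R : ℝ) :
    ∫⁻ x in ball a R, g x ∂μ ≤ ∫⁻ x in ball 0 R, g x ∂μ :=
  setLIntegral_le_of_measure_eq (⨅ x ∈ ball (0 : E) R, g x) measurableSet_ball
    measurableSet_ball (Measure.addHaar_ball_center μ a R) measure_ball_lt_top.ne
    (fun y hy => le_iInf₂ fun x hx => hg x y <| (mem_ball_zero_iff.mp hx).le.trans <|
      not_lt.mp fun h => hy.2 (mem_ball_zero_iff.mpr h))
    (fun x hx => iInf₂_le x hx.1)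

theorem lintegral_comp_smul_addHaar (g : E → ℝ≥0∞) {R : ℝ} (hR : R ≠ 0) :
    ∫⁻ x, g (R • x) ∂μ = ENNReal.ofReal |(R ^ finrank ℝ E)⁻¹| * ∫⁻ x, g x ∂μ := by
  calc ∫⁻ x, g (R • x) ∂μ = ∫⁻ x, g x ∂(Measure.map (R • ·) μ) :=
        (lintegral_map_equiv g (MeasurableEquiv.smul₀ R hR)).symm
    _ = _ := by rw [Measure.map_addHaar_smul μ hR, lintegral_smul_measure, smul_eq_mul]

theorem setLIntegral_ball_enorm_rpow_neg (c : ℝ) {R : ℝ} (hR : 0 < R) :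
    ∫⁻ x in ball (0 : E) R, ‖x‖ₑ ^ (-c) ∂μ =
      ENNReal.ofReal (R ^ ((finrank ℝ E : ℝ) - c)) * ∫⁻ x in ball (0 : E) 1, ‖x‖ₑ ^ (-c) ∂μ := by
  have hscale : ∀ y : E, (ball (0 : E) R).indicator (‖·‖ₑ ^ (-c)) (R • y) =
      ENNReal.ofReal R ^ (-c) * (ball (0 : E) 1).indicator (‖·‖ₑ ^ (-c)) y := by
    intro y
    have hnorm : ‖R • y‖ = R * ‖y‖ := by rw [norm_smul, Real.norm_of_nonneg hR.le]
    by_cases hy : y ∈ ball (0 : E) 1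
    · have hRy : R • y ∈ ball (0 : E) R := by
        rw [mem_ball_zero_iff, hnorm]
        exact mul_lt_of_lt_one_right hR (mem_ball_zero_iff.mp hy)
      rw [indicator_of_mem hRy, indicator_of_mem hy, enorm_smul, Real.enorm_of_nonneg hR.le,
        ENNReal.mul_rpow_of_ne_top ENNReal.ofReal_ne_top enorm_ne_top]
    · have hRy : R • y ∉ ball (0 : E) R := by
        rw [mem_ball_zero_iff, hnorm, not_lt]
        exact le_mul_of_one_le_right hR.le (not_lt.mp (by simpa using hy))
      rw [indicator_of_notMem hRy, indicator_of_notMem hy, mul_zero]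
  have key := lintegral_comp_smul_addHaar μ ((ball (0 : E) R).indicator (‖·‖ₑ ^ (-c))) hR.ne'
  simp only [hscale] at key
  rw [lintegral_const_mul _ ((measurable_enorm.pow_const _).indicator measurableSet_ball),
    lintegral_indicator measurableSet_ball, lintegral_indicator measurableSet_ball,
    abs_of_pos (by positivity)] at key
  calc ∫⁻ x in ball (0 : E) R, ‖x‖ₑ ^ (-c) ∂μ
      = ENNReal.ofReal (R ^ finrank ℝ E) *
          (ENNReal.ofReal (R ^ finrank ℝ E)⁻¹ * ∫⁻ x in ball (0 : E) R, ‖x‖ₑ ^ (-c) ∂μ) := by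
        rw [← mul_assoc, ← ENNReal.ofReal_mul (by positivity), mul_inv_cancel₀ (by positivity),
          ENNReal.ofReal_one, one_mul]
    _ = ENNReal.ofReal (R ^ ((finrank ℝ E : ℝ) - c)) *
          ∫⁻ x in ball (0 : E) 1, ‖x‖ₑ ^ (-c) ∂μ := by
        rw [← key, ← mul_assoc, ENNReal.ofReal_rpow_of_pos hR, ← ENNReal.ofReal_mul (by positivity),
          ← Real.rpow_natCast, ← Real.rpow_add hR, sub_eq_add_neg]

theorem setLIntegral_ball_enorm_rpow_neg_lt_top (hE : 1 ≤ finrank ℝ E) {c : ℝ}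
    (hc : c < finrank ℝ E) (R : ℝ) : ∫⁻ x in ball (0 : E) R, ‖x‖ₑ ^ (-c) ∂μ < ∞ := by
  have : Nontrivial E := Module.nontrivial_of_finrank_pos (R := ℝ) (by omega)
  have hint : IntegrableOn (fun x : E => ‖x‖ ^ (-c)) (ball 0 R) μ :=
    integrableOn_ball_of_norm_le_rpow (C := 1) hE hc
      (ae_of_all _ fun x => by simp [abs_of_nonneg (Real.rpow_nonneg (norm_nonneg x) _)])
      (measurable_norm.pow_const _).aestronglyMeasurable
  calc ∫⁻ x in ball (0 : E) R, ‖x‖ₑ ^ (-c) ∂μ = ∫⁻ x in ball (0 : E) R, ‖‖x‖ ^ (-c)‖ₑ ∂μ :=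
        setLIntegral_congr_fun_ae measurableSet_ball <| (ae_norm_ne μ 0).mono fun x hx _ => by
          rw [Real.enorm_of_nonneg (by positivity), ← ENNReal.ofReal_rpow_of_pos
            (lt_of_le_of_ne (norm_nonneg x) (Ne.symm hx)), ofReal_norm]
    _ < ∞ := hint.2

theorem setLIntegral_ball_sdiff_ball_enorm_rpow_neg (hE : 1 ≤ finrank ℝ E) {c : ℝ}
    (hc : c < finrank ℝ E) {r R : ℝ} (hr : 0 < r) (hrR : r ≤ R) :
    ∫⁻ x in ball (0 : E) R \ ball 0 r, ‖x‖ₑ ^ (-c) ∂μ =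
      ENNReal.ofReal (1 - (r / R) ^ ((finrank ℝ E : ℝ) - c)) *
        ∫⁻ x in ball (0 : E) R, ‖x‖ₑ ^ (-c) ∂μ := by
  have hR : 0 < R := hr.trans_le hrR
  set s := (r / R) ^ ((finrank ℝ E : ℝ) - c) with hs_def
  have hs : s ≤ 1 := Real.rpow_le_one (by positivity) ((div_le_one hR).mpr hrR) (by linarith)
  have hball : ∫⁻ x in ball (0 : E) r, ‖x‖ₑ ^ (-c) ∂μ =
      ENNReal.ofReal s * ∫⁻ x in ball (0 : E) R, ‖x‖ₑ ^ (-c) ∂μ := by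
    rw [setLIntegral_ball_enorm_rpow_neg μ c hr, setLIntegral_ball_enorm_rpow_neg μ c hR,
      ← mul_assoc, ← ENNReal.ofReal_mul (by positivity), hs_def, Real.div_rpow hr.le hR.le,
      div_mul_cancel₀ _ (by positivity)]
  have hsplit := lintegral_inter_add_sdiff (‖·‖ₑ ^ (-c)) (ball (0 : E) R)
    (measurableSet_ball (x := (0 : E)) (ε := r)) (μ := μ)
  rw [inter_eq_right.mpr (ball_subset_ball hrR), hball] at hsplit
  have hfin : ENNReal.ofReal s * ∫⁻ x in ball (0 : E) R, ‖x‖ₑ ^ (-c) ∂μ ≠ ∞ :=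
    ENNReal.mul_ne_top ENNReal.ofReal_ne_top (setLIntegral_ball_enorm_rpow_neg_lt_top μ hE hc R).ne
  refine (ENNReal.add_right_inj hfin).mp ?_
  rw [hsplit, ← add_mul, ← ENNReal.ofReal_add (by positivity) (by linarith), add_sub_cancel,
    ENNReal.ofReal_one, one_mul]

end HaarBalls

section Morrey

variable {d : ℕ} {p q : ℝ}

theorem le_smallMorreyNorm (u : EuclideanSpace ℝ (Fin d) → ℝ) (a : EuclideanSpace ℝ (Fin d))
    {R : ℝ} (hR0 : 0 < R) (hR1 : R < 1) :
    volume (ball a R) ^ (1 / q - 1 / p) *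
        (∫⁻ y in ball a R, ENNReal.ofReal (|u y| ^ p)) ^ (1 / p) ≤
      smallMorreyNorm d p q u :=
  le_iSup_of_le a <| le_iSup_of_le R <| le_iSup_of_le hR0 <| le_iSup_of_le hR1 le_rfl

theorem smallMorreyNorm_congr {u v : EuclideanSpace ℝ (Fin d) → ℝ}
    (h : ∀ᵐ x, |u x| = |v x|) : smallMorreyNorm d p q u = smallMorreyNorm d p q v := by
  unfold smallMorreyNorm
  refine iSup_congr fun a => iSup_congr fun R => iSup_congr fun _ => iSup_congr fun _ => ?_
  rw [lintegral_congr_ae (ae_restrict_of_ae (h.mono fun x hx => by rw [hx]))]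

/-- The Morrey functional of `|x|^{-d/q}` on any ball `B(0, R)`. -/
noncomputable def powerMorreyConst (d : ℕ) (p q : ℝ) : ℝ≥0∞ :=
  volume (ball (0 : EuclideanSpace ℝ (Fin d)) 1) ^ (1 / q - 1 / p) *
    (∫⁻ x in ball (0 : EuclideanSpace ℝ (Fin d)) 1, ‖x‖ₑ ^ (-(d * p / q))) ^ (1 / p)

theorem volume_ball_rpow_mul_setLIntegral_rpow (hp : 0 < p) (hq : 0 < q)
    (a : EuclideanSpace ℝ (Fin d)) {R t : ℝ} (hR : 0 < R) (ht : 0 ≤ t) :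
    volume (ball a R) ^ (1 / q - 1 / p) *
        (ENNReal.ofReal t *
          ∫⁻ x in ball (0 : EuclideanSpace ℝ (Fin d)) R, ‖x‖ₑ ^ (-(d * p / q))) ^ (1 / p) =
      ENNReal.ofReal (t ^ (1 / p)) * powerMorreyConst d p q := by
  have hscale : ENNReal.ofReal ((R ^ d) ^ (1 / q - 1 / p)) *
      ENNReal.ofReal ((R ^ ((d : ℝ) - d * p / q)) ^ (1 / p)) = 1 := by
    have hexp : (d : ℝ) * (1 / q - 1 / p) + ((d : ℝ) - d * p / q) * (1 / p) = 0 := by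
      field_simp
      ring
    rw [← ENNReal.ofReal_mul (by positivity), ← Real.rpow_natCast, ← Real.rpow_mul hR.le,
      ← Real.rpow_mul hR.le, ← Real.rpow_add hR, hexp, Real.rpow_zero, ENNReal.ofReal_one]
  rw [Measure.addHaar_ball_of_pos volume a hR, setLIntegral_ball_enorm_rpow_neg volume _ hR,
    finrank_euclideanSpace_fin, powerMorreyConst,
    ENNReal.mul_rpow_of_ne_top ENNReal.ofReal_ne_top measure_ball_lt_top.ne,
    ENNReal.mul_rpow_of_nonneg _ _ (by positivity), ENNReal.mul_rpow_of_nonneg _ _ (by positivity),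
    ENNReal.ofReal_rpow_of_pos (by positivity), ENNReal.ofReal_rpow_of_nonneg ht (by positivity),
    ENNReal.ofReal_rpow_of_pos (by positivity)]
  calc _ = ENNReal.ofReal ((R ^ d) ^ (1 / q - 1 / p)) *
          ENNReal.ofReal ((R ^ ((d : ℝ) - d * p / q)) ^ (1 / p)) *
        (ENNReal.ofReal (t ^ (1 / p)) *
          (volume (ball (0 : EuclideanSpace ℝ (Fin d)) 1) ^ (1 / q - 1 / p) *
            (∫⁻ x in ball (0 : EuclideanSpace ℝ (Fin d)) 1, ‖x‖ₑ ^ (-(d * p / q))) ^ (1 / p))) := by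
        ring
    _ = _ := by rw [hscale, one_mul]

theorem smallMorreyNorm_le_powerMorreyConst (hp : 0 < p) (hq : 0 < q)
    {u : EuclideanSpace ℝ (Fin d) → ℝ}
    (hu : ∀ᵐ y, ENNReal.ofReal (|u y| ^ p) ≤
      (ball (0 : EuclideanSpace ℝ (Fin d)) 1).indicator (‖·‖ₑ ^ (-(d * p / q))) y) :
    smallMorreyNorm d p q u ≤ powerMorreyConst d p q := by
  refine iSup_le fun a => iSup_le fun R => iSup_le fun hR0 => iSup_le fun hR1 => ?_
  have hint : ∫⁻ y in ball a R, ENNReal.ofReal (|u y| ^ p) ≤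
      ENNReal.ofReal 1 *
        ∫⁻ x in ball (0 : EuclideanSpace ℝ (Fin d)) R, ‖x‖ₑ ^ (-(d * p / q)) := by
    calc ∫⁻ y in ball a R, ENNReal.ofReal (|u y| ^ p)
        ≤ ∫⁻ y in ball a R, (ball 0 1).indicator (‖·‖ₑ ^ (-(d * p / q))) y :=
          lintegral_mono_ae (ae_restrict_of_ae hu)
      _ ≤ ∫⁻ y in ball 0 R, (ball 0 1).indicator (‖·‖ₑ ^ (-(d * p / q))) y :=
          setLIntegral_ball_le_setLIntegral_ball_zero_s9 volume
            (fun _ _ => indicator_ball_enorm_rpow_neg_le_of_norm_le (by positivity) 1) a R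
      _ = _ := by
          rw [ENNReal.ofReal_one, one_mul]
          exact setLIntegral_congr_fun measurableSet_ball
            fun x hx => indicator_of_mem (ball_subset_ball hR1.le hx) _
  calc _ ≤ volume (ball a R) ^ (1 / q - 1 / p) *
        (ENNReal.ofReal 1 *
          ∫⁻ x in ball (0 : EuclideanSpace ℝ (Fin d)) R, ‖x‖ₑ ^ (-(d * p / q))) ^ (1 / p) := by
        gcongr
    _ = powerMorreyConst d p q := by
        rw [volume_ball_rpow_mul_setLIntegral_rpow hp hq a hR0 zero_le_one, Real.one_rpow,
          ENNReal.ofReal_one, one_mul]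

theorem ofReal_rpow_mul_powerMorreyConst_le (hp : 0 < p) (hq : 0 < q)
    {u : EuclideanSpace ℝ (Fin d) → ℝ} {R t : ℝ} (hR0 : 0 < R) (hR1 : R < 1) (ht : 0 ≤ t)
    (hu : ENNReal.ofReal t *
        ∫⁻ x in ball (0 : EuclideanSpace ℝ (Fin d)) R, ‖x‖ₑ ^ (-(d * p / q)) ≤
      ∫⁻ y in ball 0 R, ENNReal.ofReal (|u y| ^ p)) :
    ENNReal.ofReal (t ^ (1 / p)) * powerMorreyConst d p q ≤ smallMorreyNorm d p q u := by
  rw [← volume_ball_rpow_mul_setLIntegral_rpow hp hq 0 hR0 ht]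
  exact le_trans (by gcongr) (le_smallMorreyNorm u 0 hR0 hR1)

end Morrey

section JamesPair

variable {d : ℕ} {p q ε : ℝ}

theorem natCast_mul_div_lt (hd : 1 ≤ d) (hp : 0 < p) (hpq : p < q) : (d : ℝ) * p / q < d := by
  rw [div_lt_iff₀ (hp.trans hpq)]
  exact mul_lt_mul_of_pos_left hpq (by exact_mod_cast hd)

noncomputable def truncPower (d : ℕ) (q : ℝ) (x : EuclideanSpace ℝ (Fin d)) : ℝ :=
  if 0 < ‖x‖ ∧ ‖x‖ < 1 then ‖x‖ ^ (-(d : ℝ) / q) else 0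

noncomputable def flipSign (ε : ℝ) (x : EuclideanSpace ℝ (Fin d)) : ℝ :=
  (if 0 < ‖x‖ ∧ ‖x‖ < ε then 1 else 0) - (if ε < ‖x‖ ∧ ‖x‖ < 1 then 1 else 0)

theorem ofReal_abs_truncPower_rpow (hp : 0 < p) {x : EuclideanSpace ℝ (Fin d)} (hx : x ≠ 0) :
    ENNReal.ofReal (|truncPower d q x| ^ p) =
      (ball (0 : EuclideanSpace ℝ (Fin d)) 1).indicator (‖·‖ₑ ^ (-(d * p / q))) x := by
  have hx0 : 0 < ‖x‖ := norm_pos_iff.mpr hx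
  by_cases hx1 : ‖x‖ < 1
  · rw [truncPower, if_pos ⟨hx0, hx1⟩, indicator_of_mem (mem_ball_zero_iff.mpr hx1),
      abs_of_pos (by positivity), ← Real.rpow_mul hx0.le, ← ofReal_norm,
      ENNReal.ofReal_rpow_of_pos hx0]
    ring_nf
  · rw [truncPower, if_neg (fun h => hx1 h.2), indicator_of_notMem (by simpa using hx1),
      abs_zero, Real.zero_rpow hp.ne', ENNReal.ofReal_zero]

theorem ofReal_abs_two_mul_truncPower_rpow (hp : 0 < p) {x : EuclideanSpace ℝ (Fin d)}
    (hx : x ≠ 0) :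
    ENNReal.ofReal (|2 * truncPower d q x| ^ p) =
      ENNReal.ofReal (2 ^ p) *
        (ball (0 : EuclideanSpace ℝ (Fin d)) 1).indicator (‖·‖ₑ ^ (-(d * p / q))) x := by
  rw [abs_mul, abs_two, Real.mul_rpow zero_le_two (abs_nonneg _),
    ENNReal.ofReal_mul (by positivity), ofReal_abs_truncPower_rpow hp hx]

theorem truncPower_add_flipSign_mul {x : EuclideanSpace ℝ (Fin d)} (hx : ‖x‖ < ε) :
    truncPower d q x + flipSign ε x * truncPower d q x = 2 * truncPower d q x := by
  by_cases hx0 : 0 < ‖x‖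
  · rw [flipSign, if_pos ⟨hx0, hx⟩, if_neg fun h => h.1.not_gt hx]
    ring
  · rw [truncPower, if_neg fun h => hx0 h.1]
    ring

theorem truncPower_sub_flipSign_mul {x : EuclideanSpace ℝ (Fin d)} (hx : ε < ‖x‖) :
    truncPower d q x - flipSign ε x * truncPower d q x = 2 * truncPower d q x := by
  by_cases hx1 : ‖x‖ < 1
  · rw [flipSign, if_neg fun h => h.2.not_gt hx, if_pos ⟨hx, hx1⟩]
    ring
  · rw [truncPower, if_neg fun h => hx1 h.2]
    ring

theorem abs_flipSign_mul_truncPower {x : EuclideanSpace ℝ (Fin d)} (hx : ‖x‖ ≠ ε) :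
    |flipSign ε x * truncPower d q x| = |truncPower d q x| := by
  rcases hx.lt_or_gt with hx | hx
  · have := truncPower_add_flipSign_mul (q := q) hx
    rw [show flipSign ε x * truncPower d q x = truncPower d q x by linarith]
  · have := truncPower_sub_flipSign_mul (q := q) hx
    rw [show flipSign ε x * truncPower d q x = -truncPower d q x by linarith, abs_neg]

theorem ofReal_two_mul_powerMorreyConst_le_add (hd : 1 ≤ d) (hp : 0 < p) (hq : 0 < q)
    (hε0 : 0 < ε) (hε1 : ε < 1) :
    ENNReal.ofReal 2 * powerMorreyConst d p q ≤
      smallMorreyNorm d p q (truncPower d q + fun x => flipSign ε x * truncPower d q x) := by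
  have : Nonempty (Fin d) := Fin.pos_iff_nonempty.mp hd
  have hint : ENNReal.ofReal (2 ^ p) *
        ∫⁻ x in ball (0 : EuclideanSpace ℝ (Fin d)) ε, ‖x‖ₑ ^ (-(d * p / q)) =
      ∫⁻ y in ball 0 ε, ENNReal.ofReal
        (|(truncPower d q + fun x => flipSign ε x * truncPower d q x) y| ^ p) := by
    rw [← lintegral_const_mul _ (measurable_enorm.pow_const _)]
    refine setLIntegral_congr_fun_ae measurableSet_ball
      ((ae_norm_ne volume 0).mono fun y hy hyε => ?_)
    have hyε : ‖y‖ < ε := mem_ball_zero_iff.mp hyε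
    rw [Pi.add_apply, truncPower_add_flipSign_mul hyε,
      ofReal_abs_two_mul_truncPower_rpow hp (norm_ne_zero_iff.mp hy),
      indicator_of_mem (mem_ball_zero_iff.mpr (hyε.trans hε1))]
  have h := ofReal_rpow_mul_powerMorreyConst_le hp hq hε0 hε1 (by positivity) hint.le
  rwa [one_div, Real.rpow_rpow_inv zero_le_two hp.ne'] at h

theorem ofReal_rpow_mul_powerMorreyConst_le_sub (hd : 1 ≤ d) (hp : 0 < p) (hpq : p < q)
    (hε0 : 0 < ε) {R : ℝ} (hεR : ε < R) (hR1 : R < 1) :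
    ENNReal.ofReal ((2 ^ p * (1 - (ε / R) ^ ((d : ℝ) - d * p / q))) ^ (1 / p)) *
        powerMorreyConst d p q ≤
      smallMorreyNorm d p q (truncPower d q - fun x => flipSign ε x * truncPower d q x) := by
  have : Nonempty (Fin d) := Fin.pos_iff_nonempty.mp hd
  have hq : 0 < q := hp.trans hpq
  have hR0 : 0 < R := hε0.trans hεR
  have hc : d * p / q < d := natCast_mul_div_lt hd hp hpq
  have hs : (ε / R) ^ ((d : ℝ) - d * p / q) ≤ 1 :=
    Real.rpow_le_one (by positivity) ((div_le_one hR0).mpr hεR.le) (by linarith)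
  have hannulus := setLIntegral_ball_sdiff_ball_enorm_rpow_neg
    (volume : Measure (EuclideanSpace ℝ (Fin d))) (c := d * p / q)
    (by simpa using hd) (by simpa using hc) hε0 hεR.le
  rw [finrank_euclideanSpace_fin] at hannulus
  refine ofReal_rpow_mul_powerMorreyConst_le hp hq hR0 hR1
    (mul_nonneg (by positivity) (sub_nonneg.mpr hs)) ?_
  calc _ = ENNReal.ofReal (2 ^ p) *
        ∫⁻ x in ball (0 : EuclideanSpace ℝ (Fin d)) R \ ball 0 ε, ‖x‖ₑ ^ (-(d * p / q)) := by
        rw [hannulus, ENNReal.ofReal_mul (by positivity), mul_assoc]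
    _ = ∫⁻ y in ball 0 R \ ball 0 ε, ENNReal.ofReal
          (|(truncPower d q - fun x => flipSign ε x * truncPower d q x) y| ^ p) := by
        rw [← lintegral_const_mul _ (measurable_enorm.pow_const _)]
        refine setLIntegral_congr_fun_ae (measurableSet_ball.diff measurableSet_ball)
          ((ae_norm_ne volume ε).mono fun y hy hyR => ?_)
        have hεy : ε < ‖y‖ :=
          lt_of_le_of_ne (not_lt.mp fun h => hyR.2 (mem_ball_zero_iff.mpr h)) hy.symm
        rw [Pi.sub_apply, truncPower_sub_flipSign_mul hεy,
          ofReal_abs_two_mul_truncPower_rpow hp (norm_pos_iff.mp (hε0.trans hεy)),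
          indicator_of_mem (mem_ball_zero_iff.mpr ((mem_ball_zero_iff.mp hyR.1).trans hR1))]
    _ ≤ _ := lintegral_mono_set sdiff_subset

theorem ofReal_two_mul_rpow_mul_powerMorreyConst_le_sub (hd : 1 ≤ d) (hp : 0 < p)
    (hpq : p < q) (hε0 : 0 < ε) (hε1 : ε < 1) :
    ENNReal.ofReal (2 * (1 - ε ^ ((d : ℝ) - d * p / q)) ^ (1 / p)) * powerMorreyConst d p q ≤
      smallMorreyNorm d p q (truncPower d q - fun x => flipSign ε x * truncPower d q x) := by
  set β := (d : ℝ) - d * p / q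
  have hβ : 0 < β := sub_pos.mpr (natCast_mul_div_lt hd hp hpq)
  have hεβ : ε ^ β < 1 := Real.rpow_lt_one hε0.le hε1 hβ
  have hlim : Tendsto (fun R : ℝ => (2 ^ p * (1 - (ε / R) ^ β)) ^ (1 / p)) (𝓝 1)
      (𝓝 (2 * (1 - ε ^ β) ^ (1 / p))) := by
    have hquot : ContinuousAt (fun R : ℝ => (ε / R) ^ β) 1 :=
      (continuousAt_const.div continuousAt_id one_ne_zero).rpow_const (Or.inr hβ.le)
    have hcont : ContinuousAt (fun R : ℝ => (2 ^ p * (1 - (ε / R) ^ β)) ^ (1 / p)) 1 :=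
      (continuousAt_const.mul (continuousAt_const.sub hquot)).rpow_const (Or.inr (by positivity))
    convert hcont.tendsto using 2
    rw [div_one, Real.mul_rpow (by positivity) (by linarith), one_div,
      Real.rpow_rpow_inv zero_le_two hp.ne']
  have hpos : ENNReal.ofReal (2 * (1 - ε ^ β) ^ (1 / p)) ≠ 0 := by
    have : 0 < 1 - ε ^ β := by linarith
    exact (ENNReal.ofReal_pos.mpr (by positivity)).ne'
  refine le_of_tendsto (ENNReal.Tendsto.mul_const
    (ENNReal.tendsto_ofReal (hlim.mono_left (nhdsWithin_le_nhds (s := Iio 1)))) (Or.inl hpos)) ?_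
  filter_upwards [Ioo_mem_nhdsLT hε1] with R hR
  exact ofReal_rpow_mul_powerMorreyConst_le_sub hd hp hpq hε0 hR.1 hR.2

end JamesPair

/-- with `f(x) = |x|^{-d/q} χ_{(0,1)}(|x|)` and
`k = (χ_{(0,ε)}(|·|) - χ_{(ε,1)}(|·|)) f`, one has `‖f‖ = ‖k‖` and
`min{‖f+k‖, ‖f-k‖} ≥ 2(1 - ε^{d-dp/q})^{1/p} ‖f‖` in the small Morrey norm. -/
theorem james_pair_lower (d : ℕ) (p q : ℝ) (hp : 1 ≤ p) (hpq : p < q) (hd : 1 ≤ d)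
    (ε : ℝ) (hε0 : 0 < ε) (hε1 : ε < 1) :
    letI f : EuclideanSpace ℝ (Fin d) → ℝ :=
      fun x => if 0 < ‖x‖ ∧ ‖x‖ < 1 then ‖x‖ ^ (-(d : ℝ) / q) else 0
    letI k : EuclideanSpace ℝ (Fin d) → ℝ :=
      fun x => ((if 0 < ‖x‖ ∧ ‖x‖ < ε then (1 : ℝ) else 0) -
        (if ε < ‖x‖ ∧ ‖x‖ < 1 then (1 : ℝ) else 0)) * f x
    smallMorreyNorm d p q f = smallMorreyNorm d p q k ∧
      ENNReal.ofReal (2 * (1 - ε ^ ((d : ℝ) - d * p / q)) ^ (1 / p)) *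
          smallMorreyNorm d p q f ≤
        min (smallMorreyNorm d p q (f + k)) (smallMorreyNorm d p q (f - k)) := by
  have hp0 : 0 < p := by linarith
  have hq0 : 0 < q := by linarith
  have : Nonempty (Fin d) := Fin.pos_iff_nonempty.mp hd
  have hfK : smallMorreyNorm d p q (truncPower d q) ≤ powerMorreyConst d p q :=
    smallMorreyNorm_le_powerMorreyConst hp0 hq0 ((ae_norm_ne volume 0).mono fun x hx =>
      (ofReal_abs_truncPower_rpow hp0 (norm_ne_zero_iff.mp hx)).le)
  have hle : 2 * (1 - ε ^ ((d : ℝ) - d * p / q)) ^ (1 / p) ≤ 2 := by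
    have hβ : 0 ≤ (d : ℝ) - d * p / q := sub_nonneg.mpr (natCast_mul_div_lt hd hp0 hpq).le
    have hεβ : ε ^ ((d : ℝ) - d * p / q) ≤ 1 := Real.rpow_le_one hε0.le hε1.le hβ
    have : (1 - ε ^ ((d : ℝ) - d * p / q)) ^ (1 / p) ≤ 1 :=
      Real.rpow_le_one (by linarith) (by linarith [Real.rpow_nonneg hε0.le ((d : ℝ) - d * p / q)])
        (by positivity)
    linarith
  refine ⟨smallMorreyNorm_congr ((ae_norm_ne volume ε).mono fun x hx =>
    (abs_flipSign_mul_truncPower hx).symm), le_min ?_ ?_⟩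
  · calc _ ≤ ENNReal.ofReal 2 * powerMorreyConst d p q := mul_le_mul' (ofReal_le_ofReal hle) hfK
      _ ≤ _ := ofReal_two_mul_powerMorreyConst_le_add hd hp0 hq0 hε0 hε1
  · exact (mul_le_mul' le_rfl hfK).trans
      (ofReal_two_mul_rpow_mul_powerMorreyConst_le_sub hd hp0 hpq hε0 hε1)
end

section
/- Let 1 ≤ p < q < ∞, d ≥ 1, and 0 < ε < 1. Define on ℝ^d: f(x) = |x|^{-d/q}, v(x) = χ_{(1, 1/ε)}(|x|)·f(x). Then (1 − ε^{d − dp/q})^{1/p} ‖f‖_{M^p_q} ≤ ‖v‖_{M^p_q} ≤ ‖f‖_{M^p_q}. -/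
open MeasureTheory Metric ENNReal

section MorreyAux

open Set

private lemma euc_nontrivial {d : ℕ} (hd : 1 ≤ d) : Nontrivial (EuclideanSpace ℝ (Fin d)) := by
  have : Nonempty (Fin d) := ⟨⟨0, hd⟩⟩
  infer_instance

private lemma superlevel_eq {d : ℕ} {α t : ℝ} (hα : 0 < α) (ht : 0 < t) :
    {x : EuclideanSpace ℝ (Fin d) | t < ‖x‖ ^ (-α)} =
      ball (0 : EuclideanSpace ℝ (Fin d)) (t ^ (-α⁻¹)) \ {0} := by
  have hz : -α⁻¹ < 0 := by simp [hα]
  ext x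
  simp only [Set.mem_setOf_eq, Set.mem_diff, mem_ball_zero_iff, Set.mem_singleton_iff]
  constructor
  · intro h
    have hx : x ≠ 0 := by
      rintro rfl
      rw [norm_zero, Real.zero_rpow (neg_ne_zero.2 hα.ne')] at h
      linarith
    have hx' : 0 < ‖x‖ := norm_pos_iff.2 hx
    have := Real.lt_rpow_inv_iff_of_neg ht hx' hz
    rw [inv_neg, inv_inv] at this
    exact ⟨this.1 h, hx⟩
  · rintro ⟨h1, hx⟩
    have hx' : 0 < ‖x‖ := norm_pos_iff.2 hx
    have := Real.lt_rpow_inv_iff_of_neg ht hx' hz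
    rw [inv_neg, inv_inv] at this
    exact this.2 h1

private lemma vol_singleton_zero {d : ℕ} (hd : 1 ≤ d) :
    volume ({0} : Set (EuclideanSpace ℝ (Fin d))) = 0 := by
  haveI := euc_nontrivial hd
  have := Measure.addHaar_sphere (volume : Measure (EuclideanSpace ℝ (Fin d))) 0 0
  simpa using this

/-- "Bathtub principle" for the radially decreasing function `‖·‖ ^ (-α)`:
the integral over any ball is at most the integral over the centered ball. -/
private lemma bathtub {d : ℕ} (hd : 1 ≤ d) {α : ℝ} (hα : 0 < α)
    (a : EuclideanSpace ℝ (Fin d)) (R : ℝ) :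
    ∫⁻ y in ball a R, ENNReal.ofReal (‖y‖ ^ (-α)) ≤
      ∫⁻ y in ball (0 : EuclideanSpace ℝ (Fin d)) R, ENNReal.ofReal (‖y‖ ^ (-α)) := by
  haveI := euc_nontrivial hd
  have hnn : ∀ μ : Measure (EuclideanSpace ℝ (Fin d)),
      0 ≤ᵐ[μ] fun x : EuclideanSpace ℝ (Fin d) => ‖x‖ ^ (-α) :=
    fun μ => Filter.Eventually.of_forall fun x => Real.rpow_nonneg (norm_nonneg x) _
  have hmble : Measurable fun x : EuclideanSpace ℝ (Fin d) => ‖x‖ ^ (-α) :=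
    measurable_norm.pow_const (-α)
  rw [lintegral_eq_lintegral_meas_lt _ (hnn _) hmble.aemeasurable,
      lintegral_eq_lintegral_meas_lt _ (hnn _) hmble.aemeasurable]
  refine setLIntegral_mono' measurableSet_Ioi fun t ht => ?_
  rw [Measure.restrict_apply' measurableSet_ball, Measure.restrict_apply' measurableSet_ball,
    superlevel_eq hα ht]
  set r := t ^ (-α⁻¹) with hr
  calc volume ((ball (0 : EuclideanSpace ℝ (Fin d)) r \ {0}) ∩ ball a R)
      ≤ volume (ball (0 : EuclideanSpace ℝ (Fin d)) (min r R)) := by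
        rcases le_total r R with h | h
        · rw [min_eq_left h]
          exact measure_mono fun y hy => hy.1.1
        · rw [min_eq_right h, ← Measure.addHaar_ball_center volume a R]
          exact measure_mono fun y hy => hy.2
    _ = volume ((ball (0 : EuclideanSpace ℝ (Fin d)) r \ {0}) ∩
          ball (0 : EuclideanSpace ℝ (Fin d)) R) := by
        have he : ball (0 : EuclideanSpace ℝ (Fin d)) r \ {0} ∩
            ball (0 : EuclideanSpace ℝ (Fin d)) R =
            ball (0 : EuclideanSpace ℝ (Fin d)) (min r R) \ {0} := by
          ext y
          simp only [Set.mem_inter_iff, Set.mem_diff, mem_ball_zero_iff, lt_min_iff,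
            Set.mem_singleton_iff]
          tauto
        rw [he, measure_diff_null (vol_singleton_zero hd)]

/-- Scaling identity for the integral of `‖·‖ ^ (-α)` over centered balls. -/
private lemma scale_aux {d : ℕ} {α s R : ℝ} (hs : 0 < s) (hR : 0 < R) :
    ∫⁻ y in ball (0 : EuclideanSpace ℝ (Fin d)) s, ENNReal.ofReal (‖y‖ ^ (-α)) =
      ENNReal.ofReal ((s / R) ^ ((d : ℝ) - α)) *
        ∫⁻ y in ball (0 : EuclideanSpace ℝ (Fin d)) R, ENNReal.ofReal (‖y‖ ^ (-α)) := by
  set c : ℝ := R / s with hc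
  have hc0 : 0 < c := div_pos hR hs
  have hG : Measurable fun x : EuclideanSpace ℝ (Fin d) =>
      ENNReal.ofReal (‖x‖ ^ (-α)) := (measurable_norm.pow_const (-α)).ennreal_ofReal
  have hsm : Measurable fun x : EuclideanSpace ℝ (Fin d) => c • x :=
    measurable_id.const_smul c
  have hmap := Measure.map_addHaar_smul (volume : Measure (EuclideanSpace ℝ (Fin d))) hc0.ne'
  have key : ∫⁻ y in ball (0 : EuclideanSpace ℝ (Fin d)) R, ENNReal.ofReal (‖y‖ ^ (-α))
        ∂(Measure.map (c • ·) volume) =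
      ENNReal.ofReal (|(c ^ Module.finrank ℝ (EuclideanSpace ℝ (Fin d)))⁻¹|) *
        ∫⁻ y in ball (0 : EuclideanSpace ℝ (Fin d)) R, ENNReal.ofReal (‖y‖ ^ (-α)) := by
    rw [hmap]
    simp [lintegral_smul_measure]
  rw [setLIntegral_map measurableSet_ball hG hsm] at key
  have hpre : (fun x : EuclideanSpace ℝ (Fin d) => c • x) ⁻¹' ball 0 R = ball 0 s := by
    ext x
    simp only [Set.mem_preimage, mem_ball_zero_iff, norm_smul, Real.norm_eq_abs,
      abs_of_pos hc0]
    rw [← lt_div_iff₀' hc0, hc]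
    have : R / (R / s) = s := by field_simp
    rw [this]
  rw [hpre] at key
  have hin : ∀ x : EuclideanSpace ℝ (Fin d),
      ENNReal.ofReal (‖c • x‖ ^ (-α)) = ENNReal.ofReal (c ^ (-α)) * ENNReal.ofReal (‖x‖ ^ (-α)) := by
    intro x
    rw [norm_smul, Real.norm_eq_abs, abs_of_pos hc0,
      Real.mul_rpow hc0.le (norm_nonneg x), ENNReal.ofReal_mul (Real.rpow_nonneg hc0.le _)]
  simp_rw [hin] at key
  rw [lintegral_const_mul' _ _ ENNReal.ofReal_ne_top] at key
  have habs : |(c ^ Module.finrank ℝ (EuclideanSpace ℝ (Fin d)))⁻¹| =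
      (c ^ Module.finrank ℝ (EuclideanSpace ℝ (Fin d)))⁻¹ :=
    abs_of_nonneg (by positivity)
  rw [habs, finrank_euclideanSpace_fin] at key
  have step : ∫⁻ y in ball (0 : EuclideanSpace ℝ (Fin d)) s, ENNReal.ofReal (‖y‖ ^ (-α)) =
      ENNReal.ofReal (c ^ α) * (ENNReal.ofReal ((c ^ d)⁻¹) *
        ∫⁻ y in ball (0 : EuclideanSpace ℝ (Fin d)) R, ENNReal.ofReal (‖y‖ ^ (-α))) := by
    calc ∫⁻ y in ball (0 : EuclideanSpace ℝ (Fin d)) s, ENNReal.ofReal (‖y‖ ^ (-α))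
        = (ENNReal.ofReal (c ^ α) * ENNReal.ofReal (c ^ (-α))) *
            ∫⁻ y in ball (0 : EuclideanSpace ℝ (Fin d)) s, ENNReal.ofReal (‖y‖ ^ (-α)) := by
          rw [← ENNReal.ofReal_mul (Real.rpow_nonneg hc0.le _), ← Real.rpow_add hc0,
            add_neg_cancel, Real.rpow_zero, ENNReal.ofReal_one, one_mul]
      _ = ENNReal.ofReal (c ^ α) * (ENNReal.ofReal (c ^ (-α)) *
            ∫⁻ y in ball (0 : EuclideanSpace ℝ (Fin d)) s, ENNReal.ofReal (‖y‖ ^ (-α))) :=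
          mul_assoc _ _ _
      _ = _ := by rw [key]
  rw [step, ← mul_assoc, ← ENNReal.ofReal_mul (Real.rpow_nonneg hc0.le _)]
  congr 2
  have h1 : (c : ℝ) ^ (d : ℕ) = c ^ (d : ℝ) := (Real.rpow_natCast c d).symm
  have h2 : s / R = c⁻¹ := by rw [hc]; field_simp
  rw [h1, ← Real.rpow_neg hc0.le, ← Real.rpow_add hc0, h2,
    Real.inv_rpow hc0.le, ← Real.rpow_neg hc0.le]
  ring_nf

private lemma finite_aux {d : ℕ} (hd : 1 ≤ d) {α : ℝ} (hα0 : 0 < α) (hαd : α < d) (R : ℝ) :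
    ∫⁻ y in ball (0 : EuclideanSpace ℝ (Fin d)) R, ENNReal.ofReal (‖y‖ ^ (-α)) < ⊤ := by
  haveI := euc_nontrivial hd
  have hd0 : (0:ℝ) < d := by exact_mod_cast Nat.pos_of_ne_zero (by omega)
  have hmble : Measurable fun x : EuclideanSpace ℝ (Fin d) => ‖x‖ ^ (-α) :=
    measurable_norm.pow_const (-α)
  rw [lintegral_eq_lintegral_meas_lt _
    (Filter.Eventually.of_forall fun x => Real.rpow_nonneg (norm_nonneg x) _)
    hmble.aemeasurable]
  have hsplit : (Ioi (0:ℝ)) = Ioc (0:ℝ) 1 ∪ Ioi 1 := (Set.Ioc_union_Ioi_eq_Ioi zero_le_one).symm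
  rw [hsplit, lintegral_union measurableSet_Ioi Set.Ioc_disjoint_Ioi_same]
  apply ENNReal.add_lt_top.2
  constructor
  · calc ∫⁻ t in Ioc (0:ℝ) 1,
          volume.restrict (ball (0 : EuclideanSpace ℝ (Fin d)) R) {x | t < ‖x‖ ^ (-α)}
        ≤ ∫⁻ _ in Ioc (0:ℝ) 1, volume (ball (0 : EuclideanSpace ℝ (Fin d)) R) := by
          refine setLIntegral_mono' measurableSet_Ioc fun t ht => ?_
          rw [Measure.restrict_apply' measurableSet_ball]
          exact measure_mono inter_subset_right
      _ = volume (ball (0 : EuclideanSpace ℝ (Fin d)) R) * volume (Ioc (0:ℝ) 1) :=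
          setLIntegral_const _ _
      _ < ⊤ := ENNReal.mul_lt_top measure_ball_lt_top (by simp [Real.volume_Ioc])
  · have hbd : ∀ t ∈ Ioi (1:ℝ),
        volume.restrict (ball (0 : EuclideanSpace ℝ (Fin d)) R) {x | t < ‖x‖ ^ (-α)} ≤
          ENNReal.ofReal (t ^ (-((d:ℝ) * α⁻¹))) *
            volume (ball (0 : EuclideanSpace ℝ (Fin d)) 1) := by
      intro t ht
      have ht0 : (0:ℝ) < t := lt_trans one_pos ht
      calc volume.restrict (ball (0 : EuclideanSpace ℝ (Fin d)) R) {x | t < ‖x‖ ^ (-α)}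
          ≤ volume {x : EuclideanSpace ℝ (Fin d) | t < ‖x‖ ^ (-α)} := by
            rw [Measure.restrict_apply' measurableSet_ball]
            exact measure_mono inter_subset_left
        _ ≤ volume (ball (0 : EuclideanSpace ℝ (Fin d)) (t ^ (-α⁻¹))) := by
            rw [superlevel_eq hα0 ht0]
            exact measure_mono diff_subset
        _ = ENNReal.ofReal ((t ^ (-α⁻¹)) ^ (d:ℕ)) *
              volume (ball (0 : EuclideanSpace ℝ (Fin d)) 1) := by
            rw [Measure.addHaar_ball volume 0 (Real.rpow_nonneg ht0.le _),
              finrank_euclideanSpace_fin]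
        _ = ENNReal.ofReal (t ^ (-((d:ℝ) * α⁻¹))) *
              volume (ball (0 : EuclideanSpace ℝ (Fin d)) 1) := by
            rw [← Real.rpow_natCast (t ^ (-α⁻¹)) d, ← Real.rpow_mul ht0.le]
            ring_nf
    calc ∫⁻ t in Ioi (1:ℝ),
          volume.restrict (ball (0 : EuclideanSpace ℝ (Fin d)) R) {x | t < ‖x‖ ^ (-α)}
        ≤ ∫⁻ t in Ioi (1:ℝ), ENNReal.ofReal (t ^ (-((d:ℝ) * α⁻¹))) *
            volume (ball (0 : EuclideanSpace ℝ (Fin d)) 1) :=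
          setLIntegral_mono' measurableSet_Ioi hbd
      _ = (∫⁻ t in Ioi (1:ℝ), ENNReal.ofReal (t ^ (-((d:ℝ) * α⁻¹)))) *
            volume (ball (0 : EuclideanSpace ℝ (Fin d)) 1) :=
          lintegral_mul_const' _ _ measure_ball_lt_top.ne
      _ < ⊤ := by
          apply ENNReal.mul_lt_top _ measure_ball_lt_top
          have hexp : -((d:ℝ) * α⁻¹) < -1 := by
            rw [neg_lt_neg_iff, ← div_eq_mul_inv, lt_div_iff₀ hα0]
            linarith
          exact (integrableOn_Ioi_rpow_of_lt hexp one_pos).lintegral_lt_top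

/-- The Morrey quantity of `‖·‖^{-d/q}` over centered balls is independent of the radius. -/
private lemma term_const {d : ℕ} (hd : 1 ≤ d) {p q R R₀ : ℝ} (hp : 1 ≤ p) (hpq : p < q)
    (hR : 0 < R) (hR₀ : 0 < R₀) :
    volume (ball (0 : EuclideanSpace ℝ (Fin d)) R) ^ (1 / q - 1 / p) *
        (∫⁻ y in ball (0 : EuclideanSpace ℝ (Fin d)) R,
          ENNReal.ofReal (‖y‖ ^ (-((d:ℝ) * p / q)))) ^ (1 / p) =
      volume (ball (0 : EuclideanSpace ℝ (Fin d)) R₀) ^ (1 / q - 1 / p) *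
        (∫⁻ y in ball (0 : EuclideanSpace ℝ (Fin d)) R₀,
          ENNReal.ofReal (‖y‖ ^ (-((d:ℝ) * p / q)))) ^ (1 / p) := by
  haveI := euc_nontrivial hd
  have hp0 : 0 < p := lt_of_lt_of_le one_pos hp
  have hq0 : 0 < q := lt_trans hp0 hpq
  have hd0 : (0:ℝ) < d := by exact_mod_cast Nat.pos_of_ne_zero (by omega)
  rw [Measure.addHaar_ball volume 0 hR.le, Measure.addHaar_ball volume 0 hR₀.le,
    finrank_euclideanSpace_fin, scale_aux hR hR₀,
    ENNReal.mul_rpow_of_ne_top ENNReal.ofReal_ne_top measure_ball_lt_top.ne,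
    ENNReal.mul_rpow_of_ne_top ENNReal.ofReal_ne_top measure_ball_lt_top.ne,
    ENNReal.mul_rpow_of_nonneg _ _ (by positivity : (0:ℝ) ≤ 1 / p),
    ENNReal.ofReal_rpow_of_pos (pow_pos hR d),
    ENNReal.ofReal_rpow_of_pos (pow_pos hR₀ d),
    ENNReal.ofReal_rpow_of_pos (Real.rpow_pos_of_pos (div_pos hR hR₀) _)]
  have hkey : ((R:ℝ) ^ (d:ℕ)) ^ (1 / q - 1 / p) *
      (((R / R₀) ^ ((d:ℝ) - (d:ℝ) * p / q)) ^ (1 / p)) = ((R₀:ℝ) ^ (d:ℕ)) ^ (1 / q - 1 / p) := by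
    rw [← Real.rpow_natCast R d, ← Real.rpow_natCast R₀ d, ← Real.rpow_mul hR.le,
      ← Real.rpow_mul hR₀.le, ← Real.rpow_mul (le_of_lt (div_pos hR hR₀))]
    have he : ((d:ℝ) - (d:ℝ) * p / q) * (1 / p) = -((d:ℝ) * (1 / q - 1 / p)) := by
      field_simp
      ring
    rw [he, Real.div_rpow hR.le hR₀.le, Real.rpow_neg hR.le, Real.rpow_neg hR₀.le]
    have h1 : (R : ℝ) ^ ((d:ℝ) * (1 / q - 1 / p)) ≠ 0 := (Real.rpow_pos_of_pos hR _).ne'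
    have h2 : (R₀ : ℝ) ^ ((d:ℝ) * (1 / q - 1 / p)) ≠ 0 := (Real.rpow_pos_of_pos hR₀ _).ne'
    field_simp
  calc ENNReal.ofReal ((R ^ (d:ℕ)) ^ (1 / q - 1 / p)) *
        volume (ball (0 : EuclideanSpace ℝ (Fin d)) 1) ^ (1 / q - 1 / p) *
        (ENNReal.ofReal (((R / R₀) ^ ((d:ℝ) - (d:ℝ) * p / q)) ^ (1 / p)) *
          (∫⁻ y in ball (0 : EuclideanSpace ℝ (Fin d)) R₀,
            ENNReal.ofReal (‖y‖ ^ (-((d:ℝ) * p / q)))) ^ (1 / p))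
      = ENNReal.ofReal ((R ^ (d:ℕ)) ^ (1 / q - 1 / p) *
          ((R / R₀) ^ ((d:ℝ) - (d:ℝ) * p / q)) ^ (1 / p)) *
        (volume (ball (0 : EuclideanSpace ℝ (Fin d)) 1) ^ (1 / q - 1 / p) *
          (∫⁻ y in ball (0 : EuclideanSpace ℝ (Fin d)) R₀,
            ENNReal.ofReal (‖y‖ ^ (-((d:ℝ) * p / q)))) ^ (1 / p)) := by
        rw [ENNReal.ofReal_mul (by positivity)]
        ring
    _ = _ := by rw [hkey]; ring

end MorreyAux

/-- with `f(x) = |x|^{-d/q}` and `v = χ_{(1,1/ε)}(|·|) f`, one has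
`(1-ε^{d-dp/q})^{1/p} ‖f‖_{M^p_q} ≤ ‖v‖_{M^p_q} ≤ ‖f‖_{M^p_q}`. -/
theorem morreyNorm_middle_bounds (d : ℕ) (p q : ℝ) (hp : 1 ≤ p) (hpq : p < q)
    (hd : 1 ≤ d) (ε : ℝ) (hε0 : 0 < ε) (hε1 : ε < 1) :
    letI f : EuclideanSpace ℝ (Fin d) → ℝ := fun x => ‖x‖ ^ (-(d : ℝ) / q)
    letI v : EuclideanSpace ℝ (Fin d) → ℝ :=
      fun x => if 1 < ‖x‖ ∧ ‖x‖ < 1 / ε then f x else 0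
    ENNReal.ofReal ((1 - ε ^ ((d : ℝ) - d * p / q)) ^ (1 / p)) * morreyNorm d p q f ≤
        morreyNorm d p q v ∧
      morreyNorm d p q v ≤ morreyNorm d p q f := by
  set f : EuclideanSpace ℝ (Fin d) → ℝ := fun x => ‖x‖ ^ (-(d : ℝ) / q) with hfdef
  set v : EuclideanSpace ℝ (Fin d) → ℝ :=
    fun x => if 1 < ‖x‖ ∧ ‖x‖ < 1 / ε then f x else 0 with hvdef
  haveI := euc_nontrivial hd
  have hp0 : 0 < p := lt_of_lt_of_le one_pos hp
  have hq0 : 0 < q := lt_trans hp0 hpq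
  have hd0 : (0:ℝ) < d := by exact_mod_cast Nat.pos_of_ne_zero (by omega)
  have hα0 : 0 < (d:ℝ) * p / q := div_pos (mul_pos hd0 hp0) hq0
  have hαd : (d:ℝ) * p / q < d := by rw [div_lt_iff₀ hq0]; nlinarith
  have hγ0 : 0 < (d:ℝ) - (d:ℝ) * p / q := by linarith
  have hεγ : ε ^ ((d:ℝ) - (d:ℝ) * p / q) < 1 := Real.rpow_lt_one hε0.le hε1 hγ0
  have hεγ0 : 0 < ε ^ ((d:ℝ) - (d:ℝ) * p / q) := Real.rpow_pos_of_pos hε0 _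
  have hR₀ : 0 < 1 / ε := by positivity
  have h1R₀ : 1 < 1 / ε := one_lt_one_div hε0 hε1
  -- pointwise identity for |f|^p
  have hfG : ∀ y : EuclideanSpace ℝ (Fin d),
      ENNReal.ofReal (|f y| ^ p) = ENNReal.ofReal (‖y‖ ^ (-((d:ℝ) * p / q))) := by
    intro y
    show ENNReal.ofReal (|‖y‖ ^ (-(d : ℝ) / q)| ^ p) = _
    rw [abs_of_nonneg (Real.rpow_nonneg (norm_nonneg y) _), ← Real.rpow_mul (norm_nonneg y)]
    congr 2
    ring
  set I₀ := ∫⁻ y in ball (0 : EuclideanSpace ℝ (Fin d)) (1 / ε),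
    ENNReal.ofReal (‖y‖ ^ (-((d:ℝ) * p / q))) with hI₀def
  have hI₀top : I₀ ≠ ⊤ := (finite_aux hd hα0 hαd _).ne
  set T := volume (ball (0 : EuclideanSpace ℝ (Fin d)) (1 / ε)) ^ (1 / q - 1 / p) *
    I₀ ^ (1 / p) with hTdef
  -- morreyNorm f ≤ T
  have hf_le : morreyNorm d p q f ≤ T := by
    rw [morreyNorm]
    refine iSup_le fun a => iSup_le fun R => iSup_le fun hR => ?_
    have h1 : ∫⁻ y in ball a R, ENNReal.ofReal (|f y| ^ p) =
        ∫⁻ y in ball a R, ENNReal.ofReal (‖y‖ ^ (-((d:ℝ) * p / q))) :=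
      lintegral_congr fun y => hfG y
    rw [h1, Measure.addHaar_ball_center volume a R]
    calc volume (ball (0 : EuclideanSpace ℝ (Fin d)) R) ^ (1 / q - 1 / p) *
          (∫⁻ y in ball a R, ENNReal.ofReal (‖y‖ ^ (-((d:ℝ) * p / q)))) ^ (1 / p)
        ≤ volume (ball (0 : EuclideanSpace ℝ (Fin d)) R) ^ (1 / q - 1 / p) *
          (∫⁻ y in ball (0 : EuclideanSpace ℝ (Fin d)) R,
            ENNReal.ofReal (‖y‖ ^ (-((d:ℝ) * p / q)))) ^ (1 / p) :=
          mul_le_mul_right (ENNReal.rpow_le_rpow (bathtub hd hα0 a R) (by positivity)) _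
      _ = T := term_const hd hp hpq hR hR₀
  -- the annulus integral
  have hann : ∫⁻ y in ball (0 : EuclideanSpace ℝ (Fin d)) (1 / ε),
      ENNReal.ofReal (|v y| ^ p) =
      ENNReal.ofReal (1 - ε ^ ((d:ℝ) - (d:ℝ) * p / q)) * I₀ := by
    have hS : MeasurableSet {y : EuclideanSpace ℝ (Fin d) | 1 < ‖y‖ ∧ ‖y‖ < 1 / ε} := by
      have : {y : EuclideanSpace ℝ (Fin d) | 1 < ‖y‖ ∧ ‖y‖ < 1 / ε} =
          (fun y : EuclideanSpace ℝ (Fin d) => ‖y‖) ⁻¹' Set.Ioo 1 (1 / ε) := rfl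
      rw [this]
      exact measurable_norm measurableSet_Ioo
    have hvpt : ∀ y : EuclideanSpace ℝ (Fin d), ENNReal.ofReal (|v y| ^ p) =
        Set.indicator {y : EuclideanSpace ℝ (Fin d) | 1 < ‖y‖ ∧ ‖y‖ < 1 / ε}
          (fun y => ENNReal.ofReal (‖y‖ ^ (-((d:ℝ) * p / q)))) y := by
      intro y
      by_cases h : 1 < ‖y‖ ∧ ‖y‖ < 1 / ε
      · rw [show v y = f y from if_pos h, hfG,
          Set.indicator_of_mem (by simpa using h) _]
      · rw [show v y = 0 from if_neg h,
          Set.indicator_of_notMem (by simpa using h) _, abs_zero,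
          Real.zero_rpow hp0.ne', ENNReal.ofReal_zero]
    have hstep1 : ∫⁻ y in ball (0 : EuclideanSpace ℝ (Fin d)) (1 / ε),
        ENNReal.ofReal (|v y| ^ p) =
        ∫⁻ y in ball (0 : EuclideanSpace ℝ (Fin d)) (1 / ε) \ closedBall 0 1,
          ENNReal.ofReal (‖y‖ ^ (-((d:ℝ) * p / q))) := by
      have hset : {y : EuclideanSpace ℝ (Fin d) | 1 < ‖y‖ ∧ ‖y‖ < 1 / ε} ∩
          ball (0 : EuclideanSpace ℝ (Fin d)) (1 / ε) =
          ball (0 : EuclideanSpace ℝ (Fin d)) (1 / ε) \ closedBall 0 1 := by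
        ext y
        simp only [Set.mem_inter_iff, Set.mem_setOf_eq, mem_ball_zero_iff, Set.mem_diff,
          mem_closedBall_zero_iff, not_le]
        tauto
      rw [lintegral_congr hvpt, lintegral_indicator hS, Measure.restrict_restrict hS, hset]
    have hadd := lintegral_inter_add_diff (μ := volume)
      (fun y : EuclideanSpace ℝ (Fin d) => ENNReal.ofReal (‖y‖ ^ (-((d:ℝ) * p / q))))
      (ball (0 : EuclideanSpace ℝ (Fin d)) (1 / ε)) (measurableSet_closedBall (x := 0) (ε := 1))
    have hcap : ball (0 : EuclideanSpace ℝ (Fin d)) (1 / ε) ∩ closedBall 0 1 =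
        closedBall (0 : EuclideanSpace ℝ (Fin d)) 1 :=
      Set.inter_eq_right.2 (closedBall_subset_ball h1R₀)
    have hcb : ∫⁻ y in closedBall (0 : EuclideanSpace ℝ (Fin d)) 1,
        ENNReal.ofReal (‖y‖ ^ (-((d:ℝ) * p / q))) =
        ∫⁻ y in ball (0 : EuclideanSpace ℝ (Fin d)) 1,
          ENNReal.ofReal (‖y‖ ^ (-((d:ℝ) * p / q))) := by
      refine setLIntegral_congr (MeasureTheory.ae_eq_set.2 ⟨?_, ?_⟩)
      · rw [closedBall_diff_ball]
        exact Measure.addHaar_sphere volume 0 1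
      · rw [Set.diff_eq_empty.2 ball_subset_closedBall]
        exact measure_empty
    have hsc : ∫⁻ y in ball (0 : EuclideanSpace ℝ (Fin d)) 1,
        ENNReal.ofReal (‖y‖ ^ (-((d:ℝ) * p / q))) =
        ENNReal.ofReal (ε ^ ((d:ℝ) - (d:ℝ) * p / q)) * I₀ := by
      rw [hI₀def, scale_aux one_pos hR₀]
      congr 3
      rw [one_div_one_div]
    rw [hcap, hcb, hsc, ← hI₀def] at hadd
    have hsplit2 : ENNReal.ofReal (ε ^ ((d:ℝ) - (d:ℝ) * p / q)) * I₀ +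
        ENNReal.ofReal (1 - ε ^ ((d:ℝ) - (d:ℝ) * p / q)) * I₀ = I₀ := by
      rw [← add_mul, ← ENNReal.ofReal_add hεγ0.le (by linarith), add_sub_cancel,
        ENNReal.ofReal_one, one_mul]
    rw [hstep1]
    exact (ENNReal.add_right_inj (ENNReal.mul_ne_top ENNReal.ofReal_ne_top hI₀top)).1
      (hadd.trans hsplit2.symm)
  -- lower bound for morreyNorm v
  have hv_ge : ENNReal.ofReal ((1 - ε ^ ((d:ℝ) - (d:ℝ) * p / q)) ^ (1 / p)) * T ≤
      morreyNorm d p q v := by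
    rw [morreyNorm]
    refine le_iSup_of_le (0 : EuclideanSpace ℝ (Fin d)) (le_iSup_of_le (1 / ε)
      (le_iSup_of_le hR₀ ?_))
    rw [hann, ENNReal.mul_rpow_of_nonneg _ _ (by positivity : (0:ℝ) ≤ 1 / p),
      ENNReal.ofReal_rpow_of_nonneg (by linarith : (0:ℝ) ≤ 1 - ε ^ ((d:ℝ) - (d:ℝ) * p / q))
        (by positivity : (0:ℝ) ≤ 1 / p), hTdef]
    exact le_of_eq (by ring)
  constructor
  · calc ENNReal.ofReal ((1 - ε ^ ((d:ℝ) - (d:ℝ) * p / q)) ^ (1 / p)) * morreyNorm d p q f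
        ≤ ENNReal.ofReal ((1 - ε ^ ((d:ℝ) - (d:ℝ) * p / q)) ^ (1 / p)) * T :=
          mul_le_mul_right hf_le _
      _ ≤ morreyNorm d p q v := hv_ge
  · refine iSup_mono fun a => iSup_mono fun R => iSup_mono fun hR => ?_
    refine mul_le_mul_right (ENNReal.rpow_le_rpow (lintegral_mono fun y => ?_) (by positivity)) _
    refine ENNReal.ofReal_le_ofReal (Real.rpow_le_rpow (abs_nonneg _) ?_ hp0.le)
    show |if 1 < ‖y‖ ∧ ‖y‖ < 1 / ε then f y else 0| ≤ |f y|
    split_ifs with h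
    · exact le_refl _
    · rw [abs_zero]; exact abs_nonneg _
end
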